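/- arXiv:2602.10713 — 7 statements merged into one kernel-verified Lean document; each statement's English description precedes it below -/
import Mathlib

section
/- A semicomplete multipartite digraph has a Hamilton directed path if and only if it contains a 1-path-cycle factor. -/
/-- `x` and `y` lie in the same partite set of the multipartite digraph `A`
(i.e. they are equal or non-adjacent). -/
def SameSide {V : Type*} (A : V → V → Prop) (x y : V) : Prop :=
  x = y ∨ (¬ A x y ∧ ¬ A y x)

/-- `A` is a semicomplete multipartite digraph: it is loopless, non-adjacency
(together with equality) is transitive — so its classes form the partite sets —
and there are at least two partite sets (equivalently, at least one arc). -/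
def IsSemicompleteMultipartite {V : Type*} (A : V → V → Prop) : Prop :=
  Irreflexive A ∧ Transitive (SameSide A) ∧ ∃ x y : V, A x y

/-- A 1-path-cycle factor of the digraph `A`, encoded as a partial successor
function `f` : every value is along an arc, `f` is injective where defined, and
exactly one vertex has no successor.  Its components are one (possibly trivial,
non-empty) directed path, ending at the unique vertex with no successor and
starting at the unique vertex with no predecessor, together with a collection of
directed cycles, all vertex-disjoint and spanning. -/
def IsOnePathCycleFactor {V : Type*} (A : V → V → Prop) (f : V → Option V) : Prop :=
  (∀ v w : V, f v = some w → A v w) ∧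
  (∀ u v w : V, f u = some w → f v = some w → u = v) ∧
  (∃! v : V, f v = none)

namespace SMDGutin

variable {V : Type*} {A : V → V → Prop}


lemma forward [Fintype V] (l : List V) (hne : l ≠ []) (hnd : l.Nodup)
    (hall : ∀ v : V, v ∈ l) (hch : l.Chain' A) :
    ∃ f : V → Option V,
      (∀ v w : V, f v = some w → A v w) ∧
      (∀ u v w : V, f u = some w → f v = some w → u = v) ∧
      (∃! v : V, f v = none) := by
  classical
  refine ⟨fun v => l[l.idxOf v + 1]?, ?_, ?_, ?_⟩
  · intro v w hvw
    rw [List.getElem?_eq_some_iff] at hvw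
    obtain ⟨h1, h2⟩ := hvw
    have hv : l.idxOf v < l.length := List.idxOf_lt_length_iff.2 (hall v)
    have := List.isChain_iff_getElem.1 hch (l.idxOf v) (by omega)
    rw [List.getElem_idxOf] at this
    have h2' : l[l.idxOf v + 1] = w := by
      simpa using h2
    rwa [h2'] at this
  · intro u v w hu hv
    rw [List.getElem?_eq_some_iff] at hu hv
    obtain ⟨h1, h2⟩ := hu
    obtain ⟨h3, h4⟩ := hv
    have h5 : l.get ⟨l.idxOf u + 1, h1⟩ = l.get ⟨l.idxOf v + 1, h3⟩ := by
      simp only [List.get_eq_getElem] at h2 h4 ⊢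
      rw [h2, h4]
    have h6 := List.Nodup.get_inj_iff hnd |>.1 h5
    simp only [Fin.mk.injEq, Nat.add_right_cancel_iff] at h6
    have hu' : l.idxOf u < l.length := List.idxOf_lt_length_iff.2 (hall u)
    have hv' : l.idxOf v < l.length := List.idxOf_lt_length_iff.2 (hall v)
    calc u = l.get ⟨l.idxOf u, hu'⟩ := (List.idxOf_get hu').symm
    _ = l.get ⟨l.idxOf v, hv'⟩ := by simp only [List.get_eq_getElem]; congr 1
    _ = v := List.idxOf_get hv'
  · have hlen : 0 < l.length := List.length_pos_iff.2 hne
    refine ⟨l.getLast hne, ?_, ?_⟩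
    · have h1 : l.idxOf (l.getLast hne) = l.length - 1 := by
        rw [List.getLast_eq_getElem]
        exact List.get_idxOf hnd _
      simp only [h1]
      apply List.getElem?_eq_none_iff.2
      omega
    · intro v hv
      simp only at hv
      have hvl : l.idxOf v < l.length := List.idxOf_lt_length_iff.2 (hall v)
      have h2 := List.getElem?_eq_none_iff.1 hv
      have hidx : l.idxOf v = l.length - 1 := by omega
      have : v = l.get ⟨l.length - 1, by omega⟩ := by
        conv_lhs => rw [← List.idxOf_get hvl]
        simp only [List.get_eq_getElem]
        congr 1
      rw [this, List.getLast_eq_getElem]; rfl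


def CycChain (A : V → V → Prop) (c : List V) : Prop :=
  c.Chain' A ∧ ∀ x ∈ c.getLast?, ∀ y ∈ c.head?, A x y

lemma cycChain_rotate_one {c : List V} (h : CycChain A c) : CycChain A (c.rotate 1) := by
  obtain ⟨h1, h2⟩ := h
  match c with
  | [] => exact ⟨List.isChain_nil, by simp⟩
  | [a] =>
    rw [List.rotate_singleton]
    exact ⟨h1, h2⟩
  | a :: b :: t =>
    rw [show (a :: b :: t).rotate 1 = (b :: t) ++ [a] by
      simpa using List.rotate_cons_succ (b :: t) a 0]
    constructor
    · unfold List.Chain'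
      rw [List.isChain_append]
      refine ⟨List.IsChain.tail h1, List.isChain_singleton a, ?_⟩
      intro x hx y hy
      simp only [List.head?_cons, Option.mem_def, Option.some.injEq] at hy
      subst hy
      exact h2 x (by simpa using hx) a (by simp)
    · intro x hx y hy
      rw [List.getLast?_concat] at hx
      simp only [Option.mem_def, Option.some.injEq] at hx
      subst hx
      rw [show (b :: t) ++ [a] = b :: (t ++ [a]) from rfl] at hy
      simp only [List.head?_cons, Option.mem_def, Option.some.injEq] at hy
      subst hy
      exact (List.isChain_cons_cons.1 h1).1

lemma cycChain_rotate {c : List V} (h : CycChain A c) (n : ℕ) : CycChain A (c.rotate n) := by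
  induction n with
  | zero => simpa using h
  | succ n ih =>
    rw [show c.rotate (n + 1) = (c.rotate n).rotate 1 by rw [List.rotate_rotate]]
    exact cycChain_rotate_one ih

lemma cycChain_of_rotated {c d : List V} (h : CycChain A c) (hr : c ~r d) : CycChain A d := by
  obtain ⟨n, rfl⟩ := hr
  exact cycChain_rotate h n

def CPair (c : List V) (u v : V) : Prop := ∃ cs, c ~r (u :: v :: cs)

lemma cpair_arc {c : List V} (hC : CycChain A c) {u v : V} (h : CPair c u v) : A u v := by
  obtain ⟨cs, hr⟩ := h
  have := cycChain_of_rotated hC hr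
  exact (List.isChain_cons_cons.1 this.1).1

lemma cpair_next {c : List V} {u v : V} (h : CPair c u v) : ∃ w, CPair c v w := by
  obtain ⟨cs, hr⟩ := h
  have h1 : (u :: v :: cs) ~r ((v :: cs) ++ [u]) :=
    ⟨1, by simpa using List.rotate_cons_succ (v :: cs) u 0⟩
  match cs with
  | [] => exact ⟨u, [], hr.trans h1⟩
  | w :: cs' => exact ⟨w, cs' ++ [u], hr.trans (by simpa using h1)⟩

lemma cpair_mem_left {c : List V} {u v : V} (h : CPair c u v) : u ∈ c := by
  obtain ⟨cs, hr⟩ := h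
  exact hr.perm.symm.subset (by simp)

lemma cpair_mem_right {c : List V} {u v : V} (h : CPair c u v) : v ∈ c := by
  obtain ⟨cs, hr⟩ := h
  exact hr.perm.symm.subset (by simp)

lemma exists_cpair {c : List V} (hlen : 2 ≤ c.length) {u : V} (hu : u ∈ c) :
    ∃ v, CPair c u v := by
  obtain ⟨s, t, rfl⟩ := List.append_of_mem hu
  have hr : (s ++ u :: t) ~r (u :: (t ++ s)) :=
    ⟨s.length, by rw [List.rotate_append_length_eq s (u :: t)]; simp⟩
  match ht : t ++ s with
  | [] =>
    exfalso
    have := congrArg List.length ht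
    simp at this
    simp [this.1, this.2] at hlen
  | v :: cs => exact ⟨v, cs, ht ▸ hr⟩


lemma ss_symm {x y : V} (h : SameSide A x y) : SameSide A y x := by
  rcases h with rfl | ⟨h1, h2⟩; exacts [Or.inl rfl, Or.inr ⟨h2, h1⟩]
lemma not_ss_of_arc (hIrr : Irreflexive A) {x y : V} (h : A x y) : ¬ SameSide A x y := by
  rintro (rfl | ⟨h1, _⟩); exacts [hIrr x h, h1 h]
lemma arc_of_not_ss {x y : V} (h : ¬ SameSide A x y) : A x y ∨ A y x := by
  by_contra hc; push_neg at hc; exact h (Or.inr hc)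


lemma star (hIrr : Irreflexive A) (hTr : Transitive (SameSide A)) {c : List V}
    (hcyc : CycChain A c) {p1 t0 : V} (ht0 : ¬ SameSide A t0 p1)
    (hB : ∀ u v, CPair c u v → A u p1 → SameSide A t0 v) :
    ∀ u v, CPair c u v → A u p1 →
      SameSide A t0 v ∧ A p1 v ∧ ¬ SameSide A t0 u := by
  intro u v hp harc
  have hssv := hB u v hp harc
  obtain ⟨w, hvw⟩ := cpair_next hp
  have havw := cpair_arc hcyc hvw
  have hnvp : ¬ A v p1 := fun hv => not_ss_of_arc hIrr havw (hTr (ss_symm hssv) (hB v w hvw hv))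
  have hnspv : ¬ SameSide A p1 v := fun hss => ht0 (hTr hssv (ss_symm hss))
  have hpv := (arc_of_not_ss hnspv).resolve_right hnvp
  have hnst0u : ¬ SameSide A t0 u := fun hss =>
    not_ss_of_arc hIrr (cpair_arc hcyc hp) (hTr (ss_symm hss) hssv)
  exact ⟨hssv, hpv, hnst0u⟩

/-- Case A of the merge: some cycle vertex `u` dominates `p1` and its successor avoids `t0`'s side. -/
lemma mergeA {c : List V} (hcyc : CycChain A c) {p1 t0 : V} (l' : List V)
    (hch : (p1 :: l').Chain' A)
    (hA : ∃ u v, CPair c u v ∧ A u p1 ∧ ¬ SameSide A t0 v) :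
    ∃ R : List V, R.Perm (c ++ (p1 :: l')) ∧ R.Chain' A ∧
      ((∃ Rt, R = p1 :: Rt) ∨
       (∃ h x cs Rt, c ~r (h :: x :: cs) ∧ ¬ SameSide A t0 h ∧
         (R = h :: p1 :: Rt ∨ R = h :: x :: Rt))) := by
  obtain ⟨u, v, ⟨cs, hr⟩, harc, hns⟩ := hA
  have hr1 : (u :: v :: cs) ~r (v :: (cs ++ [u])) :=
    ⟨1, by simpa using List.rotate_cons_succ (v :: cs) u 0⟩
  have hrc : c ~r (v :: (cs ++ [u])) := hr.trans hr1
  have hcyc' := cycChain_of_rotated hcyc hrc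
  refine ⟨(v :: (cs ++ [u])) ++ (p1 :: l'), ?_, ?_, ?_⟩
  · exact (hrc.perm.symm).append_right _
  · unfold List.Chain'
    rw [List.isChain_append]
    refine ⟨hcyc'.1, hch, ?_⟩
    intro x hx y hy
    rw [show v :: (cs ++ [u]) = (v :: cs) ++ [u] from rfl, List.getLast?_concat] at hx
    simp only [Option.mem_def, Option.some.injEq] at hx hy
    rw [← hx]
    simp only [List.head?_cons, Option.some.injEq] at hy
    rw [← hy]
    exact harc
  · right
    match cs with
    | [] => exact ⟨v, u, [], p1 :: l', hrc, hns, Or.inr rfl⟩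
    | w :: cs₂ => exact ⟨v, w, cs₂ ++ [u], (cs₂ ++ [u]) ++ (p1 :: l'), hrc, hns, Or.inr (by simp)⟩

lemma merge (hIrr : Irreflexive A) (hTr : Transitive (SameSide A)) (c : List V)
    (hlen : 2 ≤ c.length) (hcnd : c.Nodup) (hcyc : CycChain A c) (l' : List V) :
    ∀ (p1 t0 : V), (p1 :: l').Nodup → (p1 :: l').Chain' A →
    (∀ x ∈ c, x ∉ (p1 :: l')) → ¬ SameSide A t0 p1 →
    ∃ R : List V, R.Perm (c ++ (p1 :: l')) ∧ R.Chain' A ∧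
      ((∃ Rt, R = p1 :: Rt) ∨
       (∃ h x cs Rt, c ~r (h :: x :: cs) ∧ ¬ SameSide A t0 h ∧
         (R = h :: p1 :: Rt ∨ R = h :: x :: Rt))) := by
  induction l' with
  | nil =>
    intro p1 t0 hnd hch hdisj ht0
    by_cases hA : ∃ u v, CPair c u v ∧ A u p1 ∧ ¬ SameSide A t0 v
    · exact mergeA hcyc [] hch hA
    push_neg at hA
    have hB : ∀ u v, CPair c u v → A u p1 → SameSide A t0 v := by
      intro u v hp harc
      by_contra hcon
      exact hcon (hA u v hp harc)
    obtain ⟨c0, c1, cs, rfl⟩ : ∃ c0 c1 cs, c = c0 :: c1 :: cs := by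
      match c, hlen with
      | c0 :: c1 :: cs, _ => exact ⟨c0, c1, cs, rfl⟩
    have hp01 : CPair (c0 :: c1 :: cs) c0 c1 := ⟨cs, List.IsRotated.refl _⟩
    have hw : ∃ w, w ∈ (c0 :: c1 :: cs) ∧ A p1 w := by
      by_cases h0 : SameSide A p1 c0
      · have h1 : ¬ SameSide A p1 c1 := fun hss =>
          not_ss_of_arc hIrr (cpair_arc hcyc hp01) (hTr (ss_symm h0) hss)
        rcases arc_of_not_ss h1 with hp | hp
        · exact ⟨c1, by simp, hp⟩
        · obtain ⟨c2, h12⟩ := cpair_next hp01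
          exact ⟨c2, cpair_mem_right h12, (star hIrr hTr hcyc ht0 hB c1 c2 h12 hp).2.1⟩
      · rcases arc_of_not_ss h0 with hp | hp
        · exact ⟨c0, by simp, hp⟩
        · exact ⟨c1, by simp, (star hIrr hTr hcyc ht0 hB c0 c1 hp01 hp).2.1⟩
    obtain ⟨w, hwmem, hpw⟩ := hw
    obtain ⟨s, t, hc⟩ := List.append_of_mem hwmem
    have hrot : (c0 :: c1 :: cs) ~r (w :: (t ++ s)) := by
      rw [hc]
      exact ⟨s.length, by rw [List.rotate_append_length_eq]; simp⟩
    refine ⟨p1 :: w :: (t ++ s), ?_, ?_, Or.inl ⟨_, rfl⟩⟩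
    · exact ((hrot.perm.symm).cons p1).trans (by simpa using
        (List.perm_middle (a := p1) (l₁ := c0 :: c1 :: cs) (l₂ := [])).symm)
    · exact List.isChain_cons_cons.2 ⟨hpw, (cycChain_of_rotated hcyc hrot).1⟩
  | cons p2 l'' ih =>
    intro p1 t0 hnd hch hdisj ht0
    by_cases hA : ∃ u v, CPair c u v ∧ A u p1 ∧ ¬ SameSide A t0 v
    · exact mergeA hcyc _ hch hA
    push_neg at hA
    have hB : ∀ u v, CPair c u v → A u p1 → SameSide A t0 v := by
      intro u v hp harc
      by_contra hcon
      exact hcon (hA u v hp harc)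
    have harc12 : A p1 p2 := (List.isChain_cons_cons.1 hch).1
    have hns12 : ¬ SameSide A p1 p2 := not_ss_of_arc hIrr harc12
    obtain ⟨R', hperm', hch', hgood'⟩ :=
      ih p2 p1 (hnd.of_cons) (List.isChain_cons_cons.1 hch).2
        (fun x hx hmem => hdisj x hx (List.mem_cons_of_mem _ hmem)) hns12
    rcases hgood' with ⟨Rt, rfl⟩ | ⟨h, x, cs, Rt, hrot, hnsh, hforms⟩
    · refine ⟨p1 :: p2 :: Rt, ?_, ?_, Or.inl ⟨_, rfl⟩⟩
      · exact ((hperm'.cons p1).trans List.perm_middle.symm)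
      · exact List.isChain_cons_cons.2 ⟨harc12, hch'⟩
    · by_cases hph : A p1 h
      · refine ⟨p1 :: R', ?_, ?_, Or.inl ⟨_, rfl⟩⟩
        · exact ((hperm'.cons p1).trans List.perm_middle.symm)
        · rcases hforms with rfl | rfl
          · exact List.isChain_cons_cons.2 ⟨hph, hch'⟩
          · exact List.isChain_cons_cons.2 ⟨hph, hch'⟩
      · have hhp : A h p1 := (arc_of_not_ss hnsh).resolve_left hph
        have hpair : CPair c h x := ⟨cs, hrot⟩
        obtain ⟨hssx, hpx, hnst0h⟩ := star hIrr hTr hcyc ht0 hB h x hpair hhp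
        rcases hforms with rfl | rfl
        · refine ⟨h :: p1 :: p2 :: Rt, ?_, ?_, Or.inr ⟨h, x, cs, p2 :: Rt, hrot, hnst0h, Or.inl rfl⟩⟩
          · exact (List.Perm.swap p1 h _).trans ((hperm'.cons p1).trans List.perm_middle.symm)
          · exact List.isChain_cons_cons.2 ⟨hhp, List.isChain_cons_cons.2 ⟨harc12, (List.isChain_cons_cons.1 hch').2⟩⟩
        · refine ⟨h :: p1 :: x :: Rt, ?_, ?_, Or.inr ⟨h, x, cs, x :: Rt, hrot, hnst0h, Or.inl rfl⟩⟩
          · exact (List.Perm.swap p1 h _).trans ((hperm'.cons p1).trans List.perm_middle.symm)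
          · exact List.isChain_cons_cons.2 ⟨hhp, List.isChain_cons_cons.2 ⟨hpx, (List.isChain_cons_cons.1 hch').2⟩⟩


def fIter (f : V → Option V) : ℕ → V → Option V
  | 0, v => some v
  | n+1, v => (f v).bind (fIter f n)

lemma fIter_succ' (f : V → Option V) (n : ℕ) (v : V) :
    fIter f (n+1) v = (fIter f n v).bind f := by
  induction n generalizing v with
  | zero =>
    show (f v).bind (fIter f 0) = (some v).bind f
    cases h : f v <;> simp [fIter, h]
  | succ n ih =>
    show (f v).bind (fIter f (n+1)) = ((f v).bind (fIter f n)).bind f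
    cases h : f v with
    | none => simp
    | some u => simpa using ih u

lemma fIter_add (f : V → Option V) (a b : ℕ) (v : V) :
    fIter f (a + b) v = (fIter f a v).bind (fIter f b) := by
  induction b with
  | zero =>
    show fIter f a v = (fIter f a v).bind (fIter f 0)
    cases fIter f a v <;> simp [fIter]
  | succ b ih =>
    rw [show a + (b+1) = (a+b)+1 from rfl, fIter_succ', ih, Option.bind_assoc]
    congr 1
    funext u
    rw [fIter_succ']

open Classical in
noncomputable def predf (f : V → Option V) (v : V) : Option V :=
  if h : ∃ u, f u = some v then some h.choose else none

lemma predf_spec {f : V → Option V} {v u : V} (h : predf f v = some u) : f u = some v := by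
  unfold predf at h
  split at h
  · rename_i hex
    injection h with h'
    rw [← h']
    exact hex.choose_spec
  · exact absurd h (by simp)

lemma predf_none {f : V → Option V} {v : V} (h : predf f v = none) : ∀ u, f u ≠ some v := by
  intro u hu
  unfold predf at h
  split at h
  · exact absurd h (by simp)
  · rename_i hne
    exact hne ⟨u, hu⟩

noncomputable def pth (f : V → Option V) : ℕ → V → List V
  | 0, v => [v]
  | n+1, v => (predf f v).elim [v] (fun u => pth f n u ++ [v])

lemma pth_ne_nil (f : V → Option V) (n : ℕ) (v : V) : pth f n v ≠ [] := by
  cases n with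
  | zero => simp [pth]
  | succ n =>
    unfold pth
    cases predf f v <;> simp

lemma pth_getLast? (f : V → Option V) (n : ℕ) (v : V) : (pth f n v).getLast? = some v := by
  cases n with
  | zero => simp [pth]
  | succ n =>
    unfold pth
    cases predf f v with
    | none => simp
    | some u => simp [List.getLast?_concat]

lemma pth_chainF (f : V → Option V) (n : ℕ) (v : V) :
    (pth f n v).Chain' (fun a b => f a = some b) := by
  induction n generalizing v with
  | zero => simp [pth, List.Chain']
  | succ n ih =>
    unfold pth
    cases hp : predf f v with
    | none => simp [List.Chain']
    | some u =>
      simp only [Option.elim]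
      unfold List.Chain'
      rw [List.isChain_append]
      refine ⟨ih u, List.isChain_singleton v, ?_⟩
      intro x hx y hy
      rw [pth_getLast?] at hx
      simp only [Option.mem_def, Option.some.injEq] at hx hy
      subst hx
      simp only [List.head?_cons, Option.some.injEq] at hy
      subst hy
      exact predf_spec hp

lemma pth_length (f : V → Option V) (n : ℕ) (v : V) : (pth f n v).length ≤ n + 1 := by
  induction n generalizing v with
  | zero => simp [pth]
  | succ n ih =>
    unfold pth
    cases predf f v with
    | none => simp
    | some u =>
      simp only [Option.elim, List.length_append, List.length_singleton]
      have := ih u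
      omega

lemma pth_head (f : V → Option V) (n : ℕ) (v : V) :
    ∃ h, (pth f n v).head? = some h ∧ (predf f h = none ∨ (pth f n v).length = n + 1) := by
  induction n generalizing v with
  | zero => exact ⟨v, by simp [pth], Or.inr (by simp [pth])⟩
  | succ n ih =>
    unfold pth
    cases hp : predf f v with
    | none => exact ⟨v, by simp, Or.inl hp⟩
    | some u =>
      obtain ⟨h, hh, hor⟩ := ih u
      refine ⟨h, ?_, ?_⟩
      · simp only [Option.elim]
        rw [List.head?_append, hh]
        rfl
      · rcases hor with h1 | h1
        · exact Or.inl h1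
        · right
          simp only [Option.elim, List.length_append, List.length_singleton, h1]

lemma pth_reach (f : V → Option V) (n : ℕ) (v : V) :
    ∀ x ∈ pth f n v, ∃ j, fIter f j x = some v := by
  induction n generalizing v with
  | zero =>
    intro x hx
    simp [pth] at hx
    exact ⟨0, by simp [hx, fIter]⟩
  | succ n ih =>
    intro x hx
    unfold pth at hx
    cases hp : predf f v with
    | none =>
      rw [hp] at hx
      simp at hx
      exact ⟨0, by simp [hx, fIter]⟩
    | some u =>
      rw [hp] at hx
      simp only [Option.elim, List.mem_append, List.mem_singleton] at hx
      rcases hx with hx | rfl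
      · obtain ⟨j, hj⟩ := ih u x hx
        refine ⟨j + 1, ?_⟩
        rw [fIter_succ', hj]
        exact predf_spec hp
      · exact ⟨0, by simp [fIter]⟩

lemma reach_unique {f : V → Option V} {e : V} (he : f e = none) {v : V} {a b : ℕ}
    (ha : fIter f a v = some e) (hb : fIter f b v = some e) : a = b := by
  have key : ∀ d : ℕ, fIter f d e = some e → d = 0 := by
    intro d hd
    cases d with
    | zero => rfl
    | succ d =>
      exfalso
      rw [show fIter f (d+1) e = (f e).bind (fIter f d) from rfl, he] at hd
      simp at hd
  rcases le_total a b with h | h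
  · obtain ⟨d, rfl⟩ := Nat.exists_eq_add_of_le h
    rw [fIter_add, ha] at hb
    simp only [Option.bind_some] at hb
    have := key d hb
    omega
  · obtain ⟨d, rfl⟩ := Nat.exists_eq_add_of_le h
    rw [fIter_add, hb] at ha
    simp only [Option.bind_some] at ha
    have := key d ha
    omega

lemma pth_nodup {f : V → Option V} {e : V} (he : f e = none) :
    ∀ (n : ℕ) (v : V), (∃ m, fIter f m v = some e) → (pth f n v).Nodup := by
  intro n
  induction n with
  | zero => intro v _; simp [pth]
  | succ n ih =>
    intro v hv
    obtain ⟨m, hm⟩ := hv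
    unfold pth
    cases hp : predf f v with
    | none => simp
    | some u =>
      simp only [Option.elim]
      have hfu : f u = some v := predf_spec hp
      have hu_reach : fIter f (m + 1) u = some e := by
        rw [show m + 1 = 1 + m by omega, fIter_add]
        rw [show fIter f 1 u = (f u).bind (fIter f 0) from rfl, hfu]
        simpa [fIter] using hm
      have h1 : (pth f n u).Nodup := ih u ⟨m + 1, hu_reach⟩
      rw [List.nodup_append]
      refine ⟨h1, List.nodup_singleton v, ?_⟩
      intro x hx y hy hxy
      rw [List.mem_singleton] at hy
      rw [hy] at hxy
      subst hxy
      obtain ⟨j, hj⟩ := pth_reach f n u x hx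
      have : fIter f (j + (m+1)) x = some e := by
        rw [fIter_add, hj]
        simpa using hu_reach
      have := reach_unique he hm this
      omega

/-- structure of membership in a chain: either head or has a predecessor in the list -/
lemma chainF_mem_pred {R : V → V → Prop} : ∀ {l : List V}, l.Chain' R → ∀ {b}, b ∈ l →
    l.head? = some b ∨ ∃ a ∈ l, R a b := by
  intro l
  induction l with
  | nil => intro _ b hb; simp at hb
  | cons x t ih =>
    intro hch b hb
    rcases List.mem_cons.1 hb with rfl | hbt
    · exact Or.inl rfl
    · match t, hbt with
      | y :: t', hbt =>
        rcases ih (List.IsChain.tail hch) hbt with hh | ⟨a, ha, hab⟩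
        · simp only [List.head?_cons, Option.some.injEq] at hh
          subst hh
          exact Or.inr ⟨x, by simp, (List.isChain_cons_cons.1 hch).1⟩
        · exact Or.inr ⟨a, List.mem_cons_of_mem _ ha, hab⟩




lemma mainInd [Fintype V] (hIrr : Irreflexive A) (hTr : Transitive (SameSide A))
    (f : V → Option V) (hArc : ∀ v w : V, f v = some w → A v w)
    (hInj : ∀ u v w : V, f u = some w → f v = some w → u = v) :
    ∀ (n : ℕ) (S : Finset V) (L : List V), S.card ≤ n → L ≠ [] → L.Nodup → L.Chain' A →
    (∀ v, v ∉ L → v ∈ S) → (∀ v ∈ S, v ∉ L) → (∀ v ∈ S, ∃ w, f v = some w ∧ w ∈ S) →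
    ∃ R : List V, R.Nodup ∧ R.Chain' A ∧ ∀ v : V, v ∈ R := by
  classical
  intro n
  induction n with
  | zero =>
    intro S L hcard hne hnd hch hcov hdisj hclo
    refine ⟨L, hnd, hch, fun v => ?_⟩
    by_contra hv
    have := hcov v hv
    rw [Finset.card_eq_zero.1 (Nat.le_zero.1 hcard)] at this
    simp at this
  | succ n ih =>
    intro S L hcard hne hnd hch hcov hdisj hclo
    rcases Finset.eq_empty_or_nonempty S with rfl | ⟨v₀, hv₀⟩
    · refine ⟨L, hnd, hch, fun v => ?_⟩
      by_contra hv
      simpa using hcov v hv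
    set g : V → V := fun v => (f v).getD v₀ with hg_def
    have hg : ∀ v ∈ S, f v = some (g v) ∧ g v ∈ S := by
      intro v hv
      obtain ⟨w, hw, hwS⟩ := hclo v hv
      have : g v = w := by simp [hg_def, hw]
      rw [this]
      exact ⟨hw, hwS⟩
    have hgit : ∀ j, g^[j] v₀ ∈ S := by
      intro j
      induction j with
      | zero => simpa using hv₀
      | succ j ihj =>
        rw [Function.iterate_succ_apply']
        exact (hg _ ihj).2
    have gInj : ∀ u ∈ S, ∀ w ∈ S, g u = g w → u = w := by
      intro u hu w hw huw
      exact hInj u w (g u) (hg u hu).1 (huw ▸ (hg w hw).1)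
    have cancel : ∀ (i : ℕ) (u w : V), u ∈ S → w ∈ S → g^[i] u = g^[i] w → u = w := by
      intro i
      induction i with
      | zero => intro u w _ _ h; simpa using h
      | succ i ihi =>
        intro u w hu hw h
        rw [Function.iterate_succ_apply, Function.iterate_succ_apply] at h
        exact gInj u hu w hw (ihi (g u) (g w) (hg u hu).2 (hg w hw).2 h)
    -- find a period
    have hper : ∃ d, 0 < d ∧ g^[d] v₀ = v₀ := by
      obtain ⟨i, hi, j, hj, hij, heq⟩ :=
        Finset.exists_ne_map_eq_of_card_lt_of_maps_to
          (s := Finset.range (S.card + 1)) (t := S)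
          (by rw [Finset.card_range]; omega) (fun j _ => hgit j)
      rcases Nat.lt_or_ge i j with hlt | hge
      · obtain ⟨d, rfl⟩ := Nat.exists_eq_add_of_lt hlt
        rw [show i + d + 1 = i + (d + 1) by omega, Function.iterate_add_apply] at heq
        exact ⟨d + 1, by omega, cancel i _ _ (hgit _) hv₀ heq.symm⟩
      · have hlt : j < i := by omega
        obtain ⟨d, rfl⟩ := Nat.exists_eq_add_of_lt hlt
        rw [show j + d + 1 = j + (d + 1) by omega, Function.iterate_add_apply] at heq
        exact ⟨d + 1, by omega, cancel j _ _ (hgit _) hv₀ heq⟩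
    set d₀ := Nat.find hper with hd₀_def
    obtain ⟨hd₀pos, hd₀per⟩ := Nat.find_spec hper
    rw [← hd₀_def] at hd₀pos hd₀per
    set c : List V := (List.range d₀).map (fun j => g^[j] v₀) with hc_def
    have hmemc : ∀ x, x ∈ c ↔ ∃ j < d₀, x = g^[j] v₀ := by
      intro x
      simp [hc_def]
    have hcS : ∀ x ∈ c, x ∈ S := by
      intro x hx
      obtain ⟨j, _, rfl⟩ := (hmemc x).1 hx
      exact hgit j
    have hclen : c.length = d₀ := by simp [hc_def]
    have hcnodup : c.Nodup := by
      rw [hc_def]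
      refine List.Nodup.map_on ?_ List.nodup_range
      intro a ha b hb hab
      rw [List.mem_range] at ha hb
      rcases Nat.le_total a b with h | h
      · obtain ⟨e, rfl⟩ := Nat.exists_eq_add_of_le h
        rw [Function.iterate_add_apply] at hab
        have he0 : g^[e] v₀ = v₀ := cancel a _ _ (hgit _) hv₀ hab.symm
        have : ¬ (0 < e ∧ g^[e] v₀ = v₀) := Nat.find_min hper (by omega)
        have he : e = 0 := by
          by_contra hne0
          exact this ⟨Nat.pos_of_ne_zero hne0, he0⟩
        omega
      · obtain ⟨e, rfl⟩ := Nat.exists_eq_add_of_le h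
        rw [Function.iterate_add_apply] at hab
        have he0 : g^[e] v₀ = v₀ := cancel b _ _ (hgit _) hv₀ hab
        have : ¬ (0 < e ∧ g^[e] v₀ = v₀) := Nat.find_min hper (by omega)
        have he : e = 0 := by
          by_contra hne0
          exact this ⟨Nat.pos_of_ne_zero hne0, he0⟩
        omega
    have harc_g : ∀ v ∈ S, A v (g v) := fun v hv => hArc _ _ (hg v hv).1
    have hchainc : c.Chain' A := by
      rw [hc_def]; unfold List.Chain'; rw [List.isChain_iff_getElem]
      intro i hi
      simp only [List.getElem_map, List.getElem_range]
      rw [Function.iterate_succ_apply']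
      exact harc_g _ (hgit i)
    have hd₀2 : 2 ≤ d₀ := by
      by_contra hlt
      have hd1 : d₀ = 1 := by omega
      have hgv : g v₀ = v₀ := by
        have := hd₀per
        rw [hd1] at this
        simpa using this
      have := harc_g v₀ hv₀
      rw [hgv] at this
      exact hIrr v₀ this
    have hcyc : CycChain A c := by
      refine ⟨hchainc, ?_⟩
      intro x hx y hy
      obtain ⟨m, hm⟩ : ∃ m, d₀ = m + 1 := ⟨d₀ - 1, by omega⟩
      have hlast : c.getLast? = some (g^[m] v₀) := by
        rw [hc_def, hm, List.range_succ, List.map_append]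
        simp [List.getLast?_concat]
      have hhead : c.head? = some v₀ := by
        rw [hc_def, hm, List.range_succ_eq_map]
        simp
      rw [hlast] at hx
      rw [hhead] at hy
      simp only [Option.mem_def, Option.some.injEq] at hx hy
      subst hx; subst hy
      have h2 : g^[m+1] v₀ = g (g^[m] v₀) := Function.iterate_succ_apply' g m v₀
      have h3 : g (g^[m] v₀) = v₀ := by rw [← h2, ← hm]; exact hd₀per
      have h4 := harc_g _ (hgit m)
      rwa [h3] at h4
    have hcdisjL : ∀ x ∈ c, x ∉ L := fun x hx => hdisj x (hcS x hx)
    -- decompose L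
    obtain ⟨p1, l', rfl⟩ : ∃ p1 l', L = p1 :: l' := by
      match L, hne with
      | p1 :: l', _ => exact ⟨p1, l', rfl⟩
    -- choose t0
    have hv₀c : v₀ ∈ c := (hmemc v₀).2 ⟨0, by omega, rfl⟩
    have hgv₀c : g v₀ ∈ c := (hmemc (g v₀)).2 ⟨1, by omega, by simp⟩
    obtain ⟨t0, ht0⟩ : ∃ t0, ¬ SameSide A t0 p1 := by
      by_cases h0 : SameSide A v₀ p1
      · refine ⟨g v₀, fun hss => ?_⟩
        exact not_ss_of_arc hIrr (harc_g v₀ hv₀) (hTr h0 (ss_symm hss))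
      · exact ⟨v₀, h0⟩
    obtain ⟨R, hperm, hchR, _⟩ :=
      merge hIrr hTr c (by omega) hcnodup hcyc l' p1 t0 hnd hch hcdisjL ht0
    -- new state
    have hccount : 1 ≤ c.length := by omega
    refine ih (S \ c.toFinset) R ?_ ?_ ?_ hchR ?_ ?_ ?_
    · -- card
      have hsub : S \ c.toFinset ⊂ S := by
        refine Finset.sdiff_ssubset ?_ ?_
        · intro x hx
          rw [List.mem_toFinset] at hx
          exact hcS x hx
        · exact ⟨v₀, List.mem_toFinset.2 hv₀c⟩
      have := Finset.card_lt_card hsub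
      omega
    · -- R ≠ []
      intro hR
      have := hperm.length_eq
      rw [hR] at this
      simp at this
    · -- nodup
      refine hperm.symm.nodup ?_
      rw [List.nodup_append]
      exact ⟨hcnodup, hnd, fun x hx y hy hxy => hcdisjL x hx (by rw [hxy]; exact hy)⟩
    · -- cover
      intro v hv
      rw [hperm.mem_iff, List.mem_append] at hv
      push_neg at hv
      rw [Finset.mem_sdiff, List.mem_toFinset]
      exact ⟨hcov v hv.2, hv.1⟩
    · -- disj
      intro v hv
      rw [Finset.mem_sdiff, List.mem_toFinset] at hv
      rw [hperm.mem_iff, List.mem_append]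
      push_neg
      exact ⟨hv.2, hdisj v hv.1⟩
    · -- closure
      intro v hv
      rw [Finset.mem_sdiff, List.mem_toFinset] at hv
      obtain ⟨hvS, hvc⟩ := hv
      obtain ⟨w, hw, hwS⟩ := hclo v hvS
      refine ⟨w, hw, ?_⟩
      rw [Finset.mem_sdiff, List.mem_toFinset]
      refine ⟨hwS, fun hwc => ?_⟩
      have hgvw : g v = w := by simp [hg_def, hw]
      obtain ⟨j, hj, hjw⟩ := (hmemc w).1 hwc
      cases j with
      | zero =>
        obtain ⟨m, hm⟩ : ∃ m, d₀ = m + 1 := ⟨d₀ - 1, by omega⟩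
        have h2 : g^[m+1] v₀ = g (g^[m] v₀) := Function.iterate_succ_apply' g m v₀
        have h1 : g (g^[m] v₀) = w := by
          rw [← h2, ← hm, hd₀per]
          simpa using hjw.symm
        have := gInj v hvS (g^[m] v₀) (hgit m) (by rw [hgvw, h1])
        exact hvc ((hmemc v).2 ⟨m, by omega, this⟩)
      | succ j' =>
        have h2 : g^[j'+1] v₀ = g (g^[j'] v₀) := Function.iterate_succ_apply' g j' v₀
        have h1 : g (g^[j'] v₀) = w := by rw [← h2]; exact hjw.symm
        have := gInj v hvS (g^[j'] v₀) (hgit j') (by rw [hgvw, h1])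
        exact hvc ((hmemc v).2 ⟨j', by omega, this⟩)


lemma backward [Fintype V] (hIrr : Irreflexive A) (hTr : Transitive (SameSide A))
    (f : V → Option V) (hArc : ∀ v w : V, f v = some w → A v w)
    (hInj : ∀ u v w : V, f u = some w → f v = some w → u = v)
    (hNone : ∃! v : V, f v = none) :
    ∃ l : List V, l.Nodup ∧ (∀ v : V, v ∈ l) ∧ l.Chain' A := by
  classical
  obtain ⟨e, he, heu⟩ := hNone
  set N := Fintype.card V with hN
  set L := pth f N e with hL
  have hnodup : L.Nodup := pth_nodup he N e ⟨0, rfl⟩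
  have hchF := pth_chainF f N e
  have hchA : L.Chain' A := hchF.imp (fun a b h => hArc a b h)
  have hne : L ≠ [] := pth_ne_nil f N e
  have heL : e ∈ L := by
    obtain ⟨h, h2⟩ := List.mem_getLast?_eq_getLast (l := L) (x := e)
      (by rw [pth_getLast?]; rfl)
    rw [h2]
    exact List.getLast_mem h
  obtain ⟨hh, hhead, hpred⟩ := pth_head f N e
  have hpredh : predf f hh = none := by
    rcases hpred with h | h
    · exact h
    · exfalso
      have := List.Nodup.length_le_card hnodup
      rw [← hL] at h
      omega
  have hclo0 : ∀ x w, x ∉ L → f x = some w → w ∉ L := by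
    intro x w hx hfxw hwL
    rcases chainF_mem_pred hchF hwL with hhd | ⟨a, haL, hfa⟩
    · rw [← hL] at hhd
      rw [hhd] at hhead
      injection hhead with hhead
      exact predf_none hpredh x (hhead ▸ hfxw)
    · exact hx (hInj a x w hfa hfxw ▸ haL)
  set S := Finset.univ.filter (fun v => v ∉ L) with hS
  obtain ⟨R, hRnd, hRch, hRall⟩ := mainInd hIrr hTr f hArc hInj S.card S L le_rfl hne hnodup hchA
    (fun v hv => by simp [hS, hv])
    (fun v hv => by simpa [hS] using hv)
    (by
      intro v hv
      have hvL : v ∉ L := by simpa [hS] using hv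
      cases hfv : f v with
      | none =>
        exfalso
        exact hvL (heu v hfv ▸ heL)
      | some w =>
        refine ⟨w, rfl, ?_⟩
        simp only [hS, Finset.mem_filter, Finset.mem_univ, true_and]
        exact hclo0 v w hvL hfv)
  exact ⟨R, hRnd, hRall, hRch⟩


end SMDGutin

/-- Gutin: a semicomplete multipartite digraph has a Hamilton
directed path iff it contains a 1-path-cycle factor. -/
theorem statement2 {V : Type*} [Fintype V] (A : V → V → Prop)
    (hSMD : IsSemicompleteMultipartite A) :
    (∃ l : List V, l.Nodup ∧ (∀ v : V, v ∈ l) ∧ l.Chain' A) ↔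
      (∃ f : V → Option V, IsOnePathCycleFactor A f) := by
  obtain ⟨hIrr, hTr, x, y, hxy⟩ := hSMD
  constructor
  · rintro ⟨l, hnd, hall, hch⟩
    obtain ⟨f, h1, h2, h3⟩ := SMDGutin.forward (A := A) l (List.ne_nil_of_mem (hall x)) hnd hall hch
    exact ⟨f, h1, h2, h3⟩
  · rintro ⟨f, hArc, hInj, hNone⟩
    exact SMDGutin.backward hIrr hTr f hArc hInj hNone
end

section
/- Let D be a semicomplete multipartite digraph with at least 3 vertices and with partite sets of sizes n_1, …, n_p. Then D has a Hamilton oriented cycle if and only if 2·max{n_i : i ∈ [p]} ≤ Σ_{i=1}^p n_i (the HC-majority inequality). -/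
/-- The list of consecutive pairs of a list, read cyclically. -/
def cycPairs {V : Type*} (l : List V) : List (V × V) := l.zip (l.rotate 1)

/-- `l` is a Hamilton oriented cycle of the digraph `A`. -/
def IsHamOrientedCycle {V : Type*} (A : V → V → Prop) (l : List V) : Prop :=
  3 ≤ l.length ∧ l.Nodup ∧ (∀ v : V, v ∈ l) ∧
    ∀ p ∈ cycPairs l, A p.1 p.2 ∨ A p.2 p.1

section Aux

variable {V : Type*}

theorem length_cycPairs (l : List V) : (cycPairs l).length = l.length := by
  simp [cycPairs]

theorem mem_cycPairs_iff (l : List V) (d : V) (p : V × V) :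
    p ∈ cycPairs l ↔ ∃ k, k < l.length ∧
      p = (l.getD k d, l.getD ((k + 1) % l.length) d) := by
  have hcompute : ∀ (k : ℕ) (hk : k < (cycPairs l).length),
      (cycPairs l)[k] = (l.getD k d, l.getD ((k + 1) % l.length) d) := by
    intro k hk
    have hk' : k < l.length := by simpa [length_cycPairs] using hk
    have h2 : (k + 1) % l.length < l.length := Nat.mod_lt _ (by omega)
    show (l.zip (l.rotate 1))[k]'(by simp [hk']) = _
    rw [List.getElem_zip, List.getElem_rotate]
    rw [List.getD_eq_getElem l d hk', List.getD_eq_getElem l d h2]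
  constructor
  · intro hp
    obtain ⟨k, hk, he⟩ := List.mem_iff_getElem.1 hp
    have hk' : k < l.length := by simpa [length_cycPairs] using hk
    exact ⟨k, hk', by rw [← he, hcompute k hk]⟩
  · rintro ⟨k, hk, rfl⟩
    have hk' : k < (cycPairs l).length := by simpa [length_cycPairs] using hk
    rw [← hcompute k hk']
    exact List.getElem_mem hk'

theorem mod_succ_inj {len a b : ℕ} (ha : a < len) (hb : b < len)
    (h : (a + 1) % len = (b + 1) % len) : a = b := by
  rcases Nat.lt_or_ge (a + 1) len with h1 | h1
  · rw [Nat.mod_eq_of_lt h1] at h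
    rcases Nat.lt_or_ge (b + 1) len with h2 | h2
    · rw [Nat.mod_eq_of_lt h2] at h; omega
    · have hb1 : b + 1 = len := by omega
      rw [hb1, Nat.mod_self] at h; omega
  · have ha1 : a + 1 = len := by omega
    rw [ha1, Nat.mod_self] at h
    rcases Nat.lt_or_ge (b + 1) len with h2 | h2
    · rw [Nat.mod_eq_of_lt h2] at h; omega
    · omega

theorem card_filter_index [Fintype V] [DecidableEq V] (l : List V) (d : V)
    (hnd : l.Nodup) (hm : ∀ v : V, v ∈ l) (p : V → Prop) [DecidablePred p] :
    ((Finset.range l.length).filter (fun k => p (l.getD k d))).card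
      = (Finset.univ.filter p).card := by
  apply Finset.card_bij (fun k _ => l.getD k d)
  · intro a ha
    simp only [Finset.mem_filter, Finset.mem_range] at ha ⊢
    exact ⟨Finset.mem_univ _, ha.2⟩
  · intro a ha b hb hab
    simp only [Finset.mem_filter, Finset.mem_range] at ha hb
    rw [List.getD_eq_getElem l d ha.1, List.getD_eq_getElem l d hb.1] at hab
    exact (hnd.getElem_inj_iff).1 hab
  · intro v hv
    simp only [Finset.mem_filter, Finset.mem_univ, true_and] at hv
    obtain ⟨k, hk, he⟩ := List.mem_iff_getElem.1 (hm v)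
    refine ⟨k, ?_, ?_⟩
    · simp only [Finset.mem_filter, Finset.mem_range]
      exact ⟨hk, by rw [List.getD_eq_getElem l d hk, he]; exact hv⟩
    · rw [List.getD_eq_getElem l d hk, he]

end Aux

/-- a semicomplete multipartite digraph on at least `3` vertices has
a Hamilton oriented cycle iff twice the size of each (equivalently, the largest)
partite set is at most the number of vertices (the HC-majority inequality). -/
theorem statement3 {V : Type*} [Fintype V] (A : V → V → Prop)
    (hSMD : IsSemicompleteMultipartite A) (h3 : 3 ≤ Fintype.card V) :
    (∃ l : List V, IsHamOrientedCycle A l) ↔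
      ∀ x : V, 2 * Nat.card {y : V | SameSide A x y} ≤ Fintype.card V := by
  classical
  obtain ⟨hirr, htrans, -⟩ := hSMD
  have ssrefl : ∀ v : V, SameSide A v v := fun v => Or.inl rfl
  have ssymm : ∀ {v w : V}, SameSide A v w → SameSide A w v := by
    intro v w hvw
    rcases hvw with h | ⟨h1, h2⟩
    · exact Or.inl h.symm
    · exact Or.inr ⟨h2, h1⟩
  have hnotss : ∀ {v w : V}, (A v w ∨ A w v) → ¬ SameSide A v w := by
    intro v w hvw hs
    rcases hs with h | ⟨h1, h2⟩
    · subst h; rcases hvw with h | h <;> exact hirr v h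
    · rcases hvw with h | h
      · exact h1 h
      · exact h2 h
  have hsemi : ∀ {v w : V}, ¬ SameSide A v w → (A v w ∨ A w v) := by
    intro v w hns
    by_contra hc
    push_neg at hc
    exact hns (Or.inr hc)
  set n := Fintype.card V with hn
  have hcardSS : ∀ x : V, Nat.card {y : V | SameSide A x y}
      = (Finset.univ.filter (fun y => SameSide A x y)).card := by
    intro x
    simp only [Set.coe_setOf, Nat.card_eq_fintype_card, Fintype.card_subtype]
  constructor
  · rintro ⟨l, hlen3, hnd, hmem, hpairs⟩ x
    have hlenu : l.toFinset = Finset.univ :=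
      Finset.eq_univ_iff_forall.2 fun v => List.mem_toFinset.2 (hmem v)
    have hlen : l.length = n := by
      rw [hn, ← Finset.card_univ, ← hlenu, List.toFinset_card_of_nodup hnd]
    set len := l.length with hlendef
    have hpos : 0 < len := by omega
    set T := (Finset.range len).filter (fun k => SameSide A x (l.getD k x)) with hT
    have hTcard : T.card = (Finset.univ.filter (fun y => SameSide A x y)).card := by
      rw [hT]
      exact card_filter_index l x hnd hmem (fun y => SameSide A x y)
    set T' := T.image (fun k => (k + 1) % len) with hT'
    have hdisj : Disjoint T T' := by
      rw [Finset.disjoint_right]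
      intro z hz' hz
      obtain ⟨k, hk, hkz⟩ := Finset.mem_image.1 hz'
      rw [hT] at hz hk
      simp only [Finset.mem_filter, Finset.mem_range] at hz hk
      have hpair := (mem_cycPairs_iff l x
          (l.getD k x, l.getD ((k + 1) % len) x)).2 ⟨k, hk.1, rfl⟩
      have hAA := hpairs _ hpair
      have hzz : SameSide A (l.getD k x) (l.getD z x) :=
        htrans (ssymm hk.2) hz.2
      rw [← hkz] at hzz
      exact hnotss hAA hzz
    have hT'card : T'.card = T.card := by
      rw [hT']
      apply Finset.card_image_of_injOn
      intro a ha b hb hab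
      rw [hT] at ha hb
      simp only [Finset.coe_filter, Set.mem_setOf_eq, Finset.mem_range] at ha hb
      exact mod_succ_inj ha.1 hb.1 hab
    have hsub : T ∪ T' ⊆ Finset.range len := by
      intro z hz
      rcases Finset.mem_union.1 hz with hz | hz
      · rw [hT] at hz; exact (Finset.mem_filter.1 hz).1
      · obtain ⟨k, hk, hkz⟩ := Finset.mem_image.1 hz
        rw [← hkz]
        exact Finset.mem_range.2 (Nat.mod_lt _ hpos)
    have hle := Finset.card_le_card hsub
    rw [Finset.card_union_of_disjoint hdisj, Finset.card_range] at hle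
    rw [hcardSS x, ← hTcard]
    omega
  · intro hmaj
    set C : V → Finset V := fun v => Finset.univ.filter (fun y => SameSide A v y) with hC
    have hmaj' : ∀ v : V, 2 * (C v).card ≤ n := by
      intro v
      have h1 := hmaj v
      rw [hcardSS v] at h1
      simpa only [hC] using h1
    have hCeq : ∀ v w : V, SameSide A v w → C v = C w := by
      intro v w hvw
      simp only [hC]
      ext z
      simp only [Finset.mem_filter, Finset.mem_univ, true_and]
      exact ⟨fun hz => htrans (ssymm hvw) hz, fun hz => htrans hvw hz⟩
    have hne : Nonempty V := Fintype.card_pos_iff.1 (by omega)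
    obtain ⟨x0, -, hx0max'⟩ := Finset.exists_max_image Finset.univ
      (fun v => (C v).card) Finset.univ_nonempty
    set c0 := (C x0).card with hc0
    have hc0max : ∀ v : V, (C v).card ≤ c0 := fun v => hx0max' v (Finset.mem_univ v)
    set hf := (n + 1) / 2 with hhf
    have hhalf : ∀ v : V, (C v).card ≤ n - hf := by
      intro v
      have := hmaj' v
      omega
    -- setoid representative and key function
    set s : Setoid V := ⟨SameSide A, ⟨ssrefl, fun {a b} hab => ssymm hab, fun {a b c} hab hbc => htrans hab hbc⟩⟩
      with hs
    set rep : V → V := fun v => (Quotient.mk s v).out with hrepdef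
    have hrep : ∀ v w : V, SameSide A v w ↔ rep v = rep w := by
      intro v w
      constructor
      · intro hvw
        simp only [hrepdef]
        exact congrArg Quotient.out (Quotient.sound hvw)
      · intro hr
        have h1 : SameSide A (rep v) v := Quotient.mk_out v
        have h2 : SameSide A (rep w) w := Quotient.mk_out w
        rw [hr] at h1
        exact htrans (ssymm h1) h2
    set e := Fintype.equivFin V with he
    set key : V → ℕ := fun v => if SameSide A x0 v then 0 else (e (rep v) : ℕ) + 1
      with hkeydef
    have hkey : ∀ v w : V, SameSide A v w ↔ key v = key w := by
      intro v w
      constructor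
      · intro hvw
        by_cases hv : SameSide A x0 v
        · have hw : SameSide A x0 w := htrans hv hvw
          simp [hkeydef, hv, hw]
        · have hw : ¬ SameSide A x0 w := fun hw => hv (htrans hw (ssymm hvw))
          have hr : rep v = rep w := (hrep v w).1 hvw
          simp [hkeydef, hv, hw, hr]
      · intro hk
        by_cases hv : SameSide A x0 v <;> by_cases hw : SameSide A x0 w
        · exact htrans (ssymm hv) hw
        · simp [hkeydef, hv, hw] at hk
        · simp [hkeydef, hv, hw] at hk
        · simp only [hkeydef, hv, hw, if_neg, not_false_iff, add_left_inj] at hk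
          exact (hrep v w).2 (e.injective (Fin.val_injective hk))
    have hx0key : key x0 = 0 := by simp [hkeydef, ssrefl x0]
    -- the sorted list
    set L : List V := Finset.univ.toList.mergeSort (fun a b => decide (key a ≤ key b))
      with hLdef
    have hperm : L.Perm Finset.univ.toList := List.mergeSort_perm _ _
    have hnodL : L.Nodup := hperm.nodup_iff.2 (Finset.nodup_toList _)
    have hmemL : ∀ v : V, v ∈ L := fun v =>
      hperm.mem_iff.2 (Finset.mem_toList.2 (Finset.mem_univ v))
    have hlenL : L.length = n := by
      rw [hperm.length_eq, Finset.length_toList, Finset.card_univ, hn]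
    have hsorted : List.Pairwise (fun a b => decide (key a ≤ key b) = true) L := by
      rw [hLdef]
      exact List.pairwise_mergeSort
        (by intro a b c h1 h2; simp only [decide_eq_true_eq] at *; omega)
        (by intro a b; simpa using Nat.le_total (key a) (key b))
        Finset.univ.toList
    set u : ℕ → V := fun k => L.getD k x0 with hu
    have humono : ∀ i j : ℕ, i ≤ j → j < n → key (u i) ≤ key (u j) := by
      intro i j hij hj
      rcases eq_or_lt_of_le hij with rfl | hlt
      · exact le_refl _
      · have hi' : i < L.length := by omega
        have hj' : j < L.length := by omega
        have := List.pairwise_iff_getElem.1 hsorted i j hi' hj' hlt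
        simp only [decide_eq_true_eq] at this
        simpa only [hu, List.getD_eq_getElem _ _ hi', List.getD_eq_getElem _ _ hj']
          using this
    have huinj : ∀ i j : ℕ, i < n → j < n → u i = u j → i = j := by
      intro i j hi hj hij
      have hi' : i < L.length := by omega
      have hj' : j < L.length := by omega
      simp only [hu, List.getD_eq_getElem _ _ hi', List.getD_eq_getElem _ _ hj'] at hij
      exact (hnodL.getElem_inj_iff).1 hij
    have husurj : ∀ v : V, ∃ k, k < n ∧ u k = v := by
      intro v
      obtain ⟨k, hk, he⟩ := List.mem_iff_getElem.1 (hmemL v)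
      exact ⟨k, by omega, by simp only [hu]; rw [List.getD_eq_getElem _ _ hk]; exact he⟩
    have hucard : ∀ v : V,
        ((Finset.range n).filter (fun k => SameSide A v (u k))).card = (C v).card := by
      intro v
      have h0 := card_filter_index L x0 hnodL hmemL (fun y => SameSide A v y)
      rw [hlenL] at h0
      simp only [hu, hC]
      exact h0
    have hcount : ∀ a b : ℕ, a ≤ b → b < n → SameSide A (u a) (u b) →
        b - a < (C (u a)).card := by
      intro a b hab hb hsab
      have hsub : Finset.Icc a b ⊆
          (Finset.range n).filter (fun k => SameSide A (u a) (u k)) := by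
        intro k hk
        rw [Finset.mem_Icc] at hk
        refine Finset.mem_filter.mpr ⟨Finset.mem_range.2 (by omega), ?_⟩
        have h1 : key (u a) ≤ key (u k) := humono a k hk.1 (by omega)
        have h2 : key (u k) ≤ key (u b) := humono k b hk.2 hb
        have h3 : key (u a) = key (u b) := (hkey _ _).1 hsab
        exact (hkey _ _).2 (by omega)
      have hle := Finset.card_le_card hsub
      rw [Nat.card_Icc, hucard] at hle
      omega
    have hu0 : SameSide A x0 (u 0) := by
      obtain ⟨t, ht, hte⟩ := husurj x0
      have h0 : key (u 0) ≤ key (u t) := humono 0 t (Nat.zero_le _) ht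
      rw [hte] at h0
      exact ssymm ((hkey (u 0) x0).2 (by omega))
    have hpre1 : ∀ k, k < n → SameSide A x0 (u k) → k < c0 := by
      intro k hk hsk
      have h1 := hcount 0 k (Nat.zero_le _) hk (htrans (ssymm hu0) hsk)
      rw [← hCeq x0 (u 0) hu0] at h1
      omega
    have hpre2 : ∀ k, k < n → k < c0 → SameSide A x0 (u k) := by
      intro k hk hklt
      by_contra hns
      have hsub : (Finset.range n).filter (fun j => SameSide A x0 (u j))
          ⊆ Finset.range k := by
        intro j hj
        rw [Finset.mem_filter, Finset.mem_range] at hj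
        rw [Finset.mem_range]
        by_contra hjk
        push_neg at hjk
        have h1 : key (u k) ≤ key (u j) := humono k j hjk hj.1
        have h2 : key x0 = key (u j) := (hkey x0 (u j)).1 hj.2
        exact hns ((hkey x0 (u k)).2 (by omega))
      have hle := Finset.card_le_card hsub
      rw [hucard x0, Finset.card_range] at hle
      omega
    have noSame : ∀ a b : ℕ, a < b → b < n → a < hf → hf ≤ b - a + 1 → n - hf ≤ b →
        ¬ SameSide A (u a) (u b) := by
      intro a b hab hb hah hba hbn hsab
      have h1 := hcount a b (le_of_lt hab) hb hsab
      have h2 := hc0max (u a)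
      have h4 := hpre2 a (by omega) (by omega)
      have h5 := htrans h4 hsab
      have h6 := hpre1 b hb h5
      have h7 := hhalf x0
      omega
    -- the interleaving permutation
    set σ : ℕ → ℕ := fun k => if k % 2 = 0 then k / 2 else hf + k / 2 with hσ
    have hσlt : ∀ k, k < n → σ k < n := by
      intro k hk
      simp only [hσ]
      split_ifs with hp <;> omega
    have hσinj : ∀ k j, k < n → j < n → σ k = σ j → k = j := by
      intro k j hk hj hkj
      simp only [hσ] at hkj
      split_ifs at hkj <;> omega
    set cyc : List V := (List.range n).map (fun k => u (σ k)) with hcyc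
    have hcyclen : cyc.length = n := by simp [hcyc]
    have hcycget : ∀ k, k < n → cyc.getD k x0 = u (σ k) := by
      intro k hk
      have hk' : k < cyc.length := by omega
      rw [List.getD_eq_getElem _ _ hk']
      simp [hcyc]
    have hnodcyc : cyc.Nodup := by
      rw [hcyc]
      apply List.Nodup.map_on ?_ List.nodup_range
      intro a ha b hb hab
      rw [List.mem_range] at ha hb
      exact hσinj a b ha hb (huinj _ _ (hσlt a ha) (hσlt b hb) hab)
    refine ⟨cyc, ?_, hnodcyc, ?_, ?_⟩
    · omega
    · intro v
      have h1 : cyc.toFinset = Finset.univ := by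
        apply Finset.eq_univ_of_card
        rw [List.toFinset_card_of_nodup hnodcyc, hcyclen]
      rw [← List.mem_toFinset, h1]
      exact Finset.mem_univ v
    · intro p hp
      obtain ⟨k, hk, hpe⟩ := (mem_cycPairs_iff cyc x0 p).1 hp
      rw [hcyclen] at hk hpe
      have hk1 : (k + 1) % n < n := Nat.mod_lt _ (by omega)
      rw [hcycget k hk, hcycget _ hk1] at hpe
      have hns : ¬ SameSide A (u (σ k)) (u (σ ((k + 1) % n))) := by
        rcases Nat.lt_or_ge (k + 1) n with hkn | hkn
        · rw [Nat.mod_eq_of_lt hkn]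
          rcases Nat.mod_two_eq_zero_or_one k with hk2 | hk2
          · have e1 : σ k = k / 2 := by simp [hσ, hk2]
            have e2 : σ (k + 1) = hf + k / 2 := by
              have hp1 : (k + 1) % 2 = 1 := by omega
              have hp2 : (k + 1) / 2 = k / 2 := by omega
              simp [hσ, hp1, hp2]
            rw [e1, e2]
            exact noSame _ _ (by omega) (by omega) (by omega) (by omega) (by omega)
          · have e1 : σ k = hf + k / 2 := by simp [hσ, hk2]
            have e2 : σ (k + 1) = k / 2 + 1 := by
              have hp1 : (k + 1) % 2 = 0 := by omega
              have hp2 : (k + 1) / 2 = k / 2 + 1 := by omega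
              simp [hσ, hp1, hp2]
            rw [e1, e2]
            intro hsab
            exact noSame (k / 2 + 1) (hf + k / 2) (by omega) (by omega) (by omega)
              (by omega) (by omega) (ssymm hsab)
        · have hkeq : k + 1 = n := by omega
          have e0 : (k + 1) % n = 0 := by rw [hkeq, Nat.mod_self]
          have e0' : σ 0 = 0 := by simp [hσ]
          rw [e0, e0']
          rcases Nat.mod_two_eq_zero_or_one k with hk2 | hk2
          · have e1 : σ k = k / 2 := by simp [hσ, hk2]
            rw [e1]
            intro hsab
            exact noSame 0 (k / 2) (by omega) (by omega) (by omega) (by omega)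
              (by omega) (ssymm hsab)
          · have e1 : σ k = hf + k / 2 := by simp [hσ, hk2]
            rw [e1]
            intro hsab
            exact noSame 0 (hf + k / 2) (by omega) (by omega) (by omega) (by omega)
              (by omega) (ssymm hsab)
      rw [hpe]
      exact hsemi hns
end

section
/- Let D be a semicomplete multipartite digraph with at least 3 vertices and with partite sets of sizes n_1, …, n_p. Then D has a Hamilton oriented path if and only if 2·max{n_i : i ∈ [p]} ≤ (Σ_{i=1}^p n_i) + 1 (the HP-majority inequality). -/
/-- The list of consecutive pairs of a list. -/
def pathPairs {V : Type*} (l : List V) : List (V × V) := l.zip l.tail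

/-- `l` is a Hamilton oriented path of the digraph `A`: a linear ordering of all
vertices in which every pair of consecutive vertices is joined by an arc in at
least one direction. -/
def IsHamOrientedPath {V : Type*} (A : V → V → Prop) (l : List V) : Prop :=
  l.Nodup ∧ (∀ v : V, v ∈ l) ∧ ∀ p ∈ pathPairs l, A p.1 p.2 ∨ A p.2 p.1

lemma mem_pathPairs_iff {V : Type*} {l : List V} {p : V × V} :
    p ∈ pathPairs l ↔ ∃ i, ∃ _h : i + 1 < l.length, p = (l[i], l[i+1]) := by
  unfold pathPairs
  constructor
  · intro hp
    rw [List.mem_iff_getElem] at hp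
    obtain ⟨i, hi, he⟩ := hp
    have hi' : i + 1 < l.length := by
      have := hi; rw [List.length_zip, List.length_tail] at this; omega
    refine ⟨i, hi', ?_⟩
    rw [List.getElem_zip, List.getElem_tail] at he
    exact he.symm
  · rintro ⟨i, hi, rfl⟩
    rw [List.mem_iff_getElem]
    refine ⟨i, by rw [List.length_zip, List.length_tail]; omega, ?_⟩
    rw [List.getElem_zip, List.getElem_tail]

lemma two_mul_card_le {n : ℕ} {I : Finset ℕ} (hlt : ∀ i ∈ I, i < n)
    (hcons : ∀ i ∈ I, i + 1 ∉ I) : 2 * I.card ≤ n + 1 := by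
  classical
  have hd : ∀ a ∈ I, ∀ b ∈ I, a ≠ b →
      Disjoint ({a, a+1} : Finset ℕ) {b, b+1} := by
    intro a ha b hb hab
    have hb1 : b ≠ a + 1 := by rintro rfl; exact hcons a ha hb
    have ha1 : a ≠ b + 1 := by rintro rfl; exact hcons b hb ha
    rw [Finset.disjoint_left]
    intro x hx hx'
    simp only [Finset.mem_insert, Finset.mem_singleton] at hx hx'
    omega
  have hcard : (I.biUnion (fun i => {i, i+1})).card = 2 * I.card := by
    rw [Finset.card_biUnion hd]
    have : ∀ i : ℕ, ({i, i+1} : Finset ℕ).card = 2 := by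
      intro i
      rw [Finset.card_insert_of_notMem (by simp), Finset.card_singleton]
    rw [Finset.sum_congr rfl (fun i _ => this i), Finset.sum_const, smul_eq_mul,
      Nat.mul_comm]
  have hsub : I.biUnion (fun i => {i, i+1}) ⊆ Finset.range (n+1) := by
    intro x hx
    rw [Finset.mem_biUnion] at hx
    obtain ⟨i, hi, hxi⟩ := hx
    have := hlt i hi
    simp only [Finset.mem_insert, Finset.mem_singleton] at hxi
    rw [Finset.mem_range]; omega
  have := Finset.card_le_card hsub
  rw [hcard, Finset.card_range] at this
  exact this

open Classical in
lemma card_index_filter {V : Type*} [Fintype V] (P : V → Prop)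
    (l : List V) (hnd : l.Nodup) (hmem : ∀ v, v ∈ l) (d : V) :
    ((Finset.range l.length).filter (fun i => P (l.getD i d))).card
      = (Finset.univ.filter (fun y => P y)).card := by
  apply Finset.card_bij (fun i _ => l.getD i d)
  · intro i hi
    rw [Finset.mem_filter] at hi ⊢
    exact ⟨Finset.mem_univ _, hi.2⟩
  · intro i hi j hj hij
    rw [Finset.mem_filter, Finset.mem_range] at hi hj
    rw [List.getD_eq_getElem l d hi.1, List.getD_eq_getElem l d hj.1] at hij
    exact (hnd.getElem_inj_iff).mp hij
  · intro y hy
    rw [Finset.mem_filter] at hy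
    obtain ⟨i, hi, hiy⟩ := List.mem_iff_getElem.mp (hmem y)
    refine ⟨i, ?_, ?_⟩
    · rw [Finset.mem_filter, Finset.mem_range]
      exact ⟨hi, by rw [List.getD_eq_getElem l d hi, hiy]; exact hy.2⟩
    · rw [List.getD_eq_getElem l d hi, hiy]

/-- a semicomplete multipartite digraph on at least `3` vertices has
a Hamilton oriented path iff twice the size of each (equivalently, the largest)
partite set is at most the number of vertices plus one (the HP-majority inequality). -/
theorem statement4 {V : Type*} [Fintype V] (A : V → V → Prop)
    (hSMD : IsSemicompleteMultipartite A) (h3 : 3 ≤ Fintype.card V) :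
    (∃ l : List V, IsHamOrientedPath A l) ↔
      ∀ x : V, 2 * Nat.card {y : V | SameSide A x y} ≤ Fintype.card V + 1 := by
  classical
  obtain ⟨hirr, htrans, -⟩ := hSMD
  set n := Fintype.card V with hn
  have hrefl : ∀ x, SameSide A x x := fun x => Or.inl rfl
  have hsymm : ∀ {x y}, SameSide A x y → SameSide A y x := by
    rintro x y (rfl | ⟨h1, h2⟩)
    · exact Or.inl rfl
    · exact Or.inr ⟨h2, h1⟩
  have hadj : ∀ {x y}, ¬ SameSide A x y → A x y ∨ A y x := by
    intro x y hxy
    by_contra hc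
    push_neg at hc
    exact hxy (Or.inr hc)
  have hadj_ne : ∀ {x y}, x ≠ y → (A x y ∨ A y x) → ¬ SameSide A x y := by
    rintro x y hxy hA (rfl | ⟨h1, h2⟩)
    · exact hxy rfl
    · rcases hA with h | h
      exacts [h1 h, h2 h]
  set cls : V → Finset V := fun x => Finset.univ.filter (fun y => SameSide A x y)
    with hcls
  set sz : V → ℕ := fun x => (cls x).card with hszdef
  have hclass : ∀ x : V, Nat.card {y : V | SameSide A x y} = sz x := by
    intro x
    simp [hszdef, hcls, Nat.card_eq_fintype_card, Fintype.card_subtype]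
  have hclseq : ∀ {x y}, SameSide A x y → cls x = cls y := by
    intro x y hxy
    simp only [hcls]
    ext z
    simp only [Finset.mem_filter, Finset.mem_univ, true_and]
    exact ⟨fun h => htrans (hsymm hxy) h, fun h => htrans hxy h⟩
  have hszeq : ∀ {x y}, SameSide A x y → sz x = sz y := by
    intro x y hxy
    simp only [hszdef, hclseq hxy]
  constructor
  · -- forward: Hamilton path gives the inequality
    rintro ⟨l, hnd, hmem, hpairs⟩ x
    rw [hclass]
    have hlen : l.length = n := by
      rw [hn, ← Finset.card_univ, ← List.toFinset_card_of_nodup hnd]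
      congr 1
      exact Finset.eq_univ_iff_forall.mpr fun v => List.mem_toFinset.mpr (hmem v)
    set I := (Finset.range n).filter (fun i => SameSide A x (l.getD i x)) with hI
    have hIcard : I.card = sz x := by
      rw [hI, ← hlen]
      exact card_index_filter (fun y => SameSide A x y) l hnd hmem x
    rw [← hIcard]
    apply two_mul_card_le (n := n)
    · intro i hi
      rw [hI, Finset.mem_filter, Finset.mem_range] at hi
      exact hi.1
    · intro i hi hi1
      rw [hI, Finset.mem_filter, Finset.mem_range] at hi hi1
      have hiL : i < l.length := by omega
      have hi1L : i + 1 < l.length := by omega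
      have e1 : l.getD i x = l[i] := List.getD_eq_getElem l x hiL
      have e2 : l.getD (i+1) x = l[i+1] := List.getD_eq_getElem l x hi1L
      have hss : SameSide A l[i] l[i+1] := by
        rw [e1] at hi; rw [e2] at hi1
        exact htrans (hsymm hi.2) hi1.2
      have hne : l[i] ≠ l[i+1] := fun h => by
        have := (hnd.getElem_inj_iff).mp h; omega
      have hp : ((l[i], l[i+1]) : V × V) ∈ pathPairs l :=
        mem_pathPairs_iff.mpr ⟨i, hi1L, rfl⟩
      exact hadj_ne hne (hpairs _ hp) hss
  · -- backward: inequality gives Hamilton path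
    intro hineq
    set h := (n + 1) / 2 with hh
    have hsz_le : ∀ x, sz x ≤ h := by
      intro x
      have := hineq x
      rw [hclass] at this
      omega
    have hVne : Nonempty V := by
      rw [← Fintype.card_pos_iff]; omega
    obtain ⟨d⟩ := hVne
    obtain ⟨x₀, -, hx₀⟩ := Finset.exists_max_image Finset.univ sz ⟨d, Finset.mem_univ d⟩
    set ι : V → ℕ := fun v => ((Fintype.equivFin V) v : ℕ) with hι
    have hιinj : Function.Injective ι := fun a b hab =>
      (Fintype.equivFin V).injective (Fin.ext hab)
    have hclsne : ∀ x, ((cls x).image ι).Nonempty :=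
      fun x => ⟨ι x, Finset.mem_image_of_mem ι (by
        simp only [hcls, Finset.mem_filter]; exact ⟨Finset.mem_univ _, hrefl x⟩)⟩
    set rep : V → ℕ := fun x => ((cls x).image ι).min' (hclsne x) with hrep
    set key : V → ℕ := fun x => if SameSide A x₀ x then 0 else rep x + 1 with hkey
    have hkey_iff : ∀ x y, key x = key y ↔ SameSide A x y := by
      intro x y
      constructor
      · intro hk
        by_cases h1 : SameSide A x₀ x <;> by_cases h2 : SameSide A x₀ y <;>
          simp only [hkey, h1, h2, if_pos, if_neg, if_true, if_false] at hk
        · exact htrans (hsymm h1) h2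
        · omega
        · omega
        · have hk' : rep x = rep y := by omega
          have hmx : rep x ∈ (cls x).image ι := Finset.min'_mem _ _
          have hmy : rep y ∈ (cls y).image ι := Finset.min'_mem _ _
          rw [hk'] at hmx
          obtain ⟨a, ha, hae⟩ := Finset.mem_image.mp hmx
          obtain ⟨b, hb, hbe⟩ := Finset.mem_image.mp hmy
          have : a = b := hιinj (by rw [hae, hbe])
          subst this
          simp only [hcls, Finset.mem_filter] at ha hb
          exact htrans ha.2 (hsymm hb.2)
      · intro hxy
        have hc : cls x = cls y := hclseq hxy
        have hr : rep x = rep y := by simp only [hrep]; congr 1; rw [hc]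
        have h2 : SameSide A x₀ x ↔ SameSide A x₀ y :=
          ⟨fun hz => htrans hz hxy, fun hz => htrans hz (hsymm hxy)⟩
        by_cases h1 : SameSide A x₀ x
        · simp only [hkey, if_pos h1, if_pos (h2.mp h1)]
        · simp only [hkey, if_neg h1, if_neg (fun hz => h1 (h2.mpr hz)), hr]
    -- the sorted list
    set L : List V := Finset.univ.toList.mergeSort
      (fun a b => decide (key a ≤ key b)) with hL
    have hperm : L.Perm Finset.univ.toList :=
      List.mergeSort_perm Finset.univ.toList _
    have hLnd : L.Nodup := hperm.nodup_iff.mpr (Finset.nodup_toList _)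
    have hLmem : ∀ v, v ∈ L := fun v =>
      hperm.mem_iff.mpr (Finset.mem_toList.mpr (Finset.mem_univ v))
    have hLlen : L.length = n := by
      rw [hperm.length_eq, Finset.length_toList, Finset.card_univ]
    have hLsorted : List.Pairwise (fun a b => key a ≤ key b) L := by
      have := List.pairwise_mergeSort
        (le := fun a b => decide (key a ≤ key b))
        (fun a b c h1 h2 => by
          simp only [decide_eq_true_eq] at *; omega)
        (fun a b => by simp only [Bool.or_eq_true, decide_eq_true_eq]; omega)
        Finset.univ.toList
      rw [← hL] at this
      exact this.imp (fun hab => by simpa using hab)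
    set g : ℕ → V := fun i => L.getD i d with hg
    have hgel : ∀ (i : ℕ) (hi : i < n), g i = L[i]'(by omega) := by
      intro i hi
      exact List.getD_eq_getElem L d (by omega)
    have hginj : ∀ i j, i < n → j < n → g i = g j → i = j := by
      intro i j hi hj hij
      rw [hgel i hi, hgel j hj] at hij
      exact (hLnd.getElem_inj_iff).mp hij
    have Kmono : ∀ i j, i ≤ j → j < n → key (g i) ≤ key (g j) := by
      intro i j hij hj
      rcases Nat.eq_or_lt_of_le hij with rfl | hlt
      · exact le_rfl
      · rw [hgel i (by omega), hgel j hj]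
        exact (List.pairwise_iff_getElem.mp hLsorted) i j (by omega) (by omega) hlt
    have hh2 : 2 ≤ h := by omega
    -- the key geometric claim
    have hcross : ∀ a b, a < b → b < n →
        (b - a = h ∨ (b - a = h - 1 ∧ 1 ≤ a ∧ a ≤ h - 1)) →
        ¬ SameSide A (g a) (g b) := by
      intro a b hab hbn hcase hss
      have hmid : ∀ i, a ≤ i → i ≤ b → SameSide A (g a) (g i) := by
        intro i h1 h2
        have k1 : key (g a) ≤ key (g i) := Kmono a i h1 (by omega)
        have k2 : key (g i) ≤ key (g b) := Kmono i b h2 hbn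
        have k3 : key (g a) = key (g b) := (hkey_iff _ _).mpr hss
        exact (hkey_iff _ _).mp (by omega)
      have hbound : ∀ u, u ≤ b → (∀ i, u ≤ i → i ≤ b → SameSide A (g a) (g i)) →
          b - u + 1 ≤ sz (g a) := by
        intro u hub hall
        have hc1 : ((Finset.Icc u b).image g).card = b - u + 1 := by
          rw [Finset.card_image_of_injOn, Nat.card_Icc]
          · omega
          · intro i hi j hj hij
            simp only [Finset.coe_Icc, Set.mem_Icc] at hi hj
            exact hginj i j (by omega) (by omega) hij
        have hc2 : (Finset.Icc u b).image g ⊆ cls (g a) := by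
          intro y hy
          obtain ⟨i, hi, rfl⟩ := Finset.mem_image.mp hy
          rw [Finset.mem_Icc] at hi
          simp only [hcls, Finset.mem_filter]
          exact ⟨Finset.mem_univ _, hall i hi.1 hi.2⟩
        have := Finset.card_le_card hc2
        rw [hc1] at this
        exact this
      rcases hcase with hc | ⟨hc, ha1, ha2⟩
      · have := hbound a (by omega) hmid
        have := hsz_le (g a)
        omega
      · have hbnd := hbound a (by omega) hmid
        by_cases h0 : key (g 0) = key (g a)
        · have hall : ∀ i, 0 ≤ i → i ≤ b → SameSide A (g a) (g i) := by
            intro i _ hib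
            rcases le_or_gt a i with hai | hia
            · exact hmid i hai hib
            · have k1 : key (g 0) ≤ key (g i) := Kmono 0 i (Nat.zero_le _) (by omega)
              have k2 : key (g i) ≤ key (g a) := Kmono i a (by omega) (by omega)
              exact (hkey_iff _ _).mp (by omega)
          have := hbound 0 (by omega) hall
          have := hsz_le (g a)
          omega
        · obtain ⟨j, hj, hjx⟩ := List.mem_iff_getElem.mp (hLmem x₀)
          have hjn : j < n := by omega
          have hgj : g j = x₀ := by rw [hgel j hjn]; exact hjx
          have hkx0 : key x₀ = 0 := by
            simp only [hkey, if_pos (hrefl x₀)]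
          have hk0 : key (g 0) = 0 := by
            have := Kmono 0 j (Nat.zero_le _) hjn
            rw [hgj, hkx0] at this
            omega
          have hss00 : SameSide A x₀ (g 0) :=
            (hkey_iff _ _).mp (by rw [hkx0, hk0])
          have hm : sz (g 0) = sz x₀ := hszeq (hsymm hss00)
          have hmax : sz (g a) ≤ sz (g 0) := by
            rw [hm]; exact hx₀ _ (Finset.mem_univ _)
          set T := (Finset.range n).filter (fun i => SameSide A (g 0) (g i)) with hT
          have hTcard : T.card = sz (g 0) := by
            have := card_index_filter (fun y => SameSide A (g 0) y) L hLnd hLmem d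
            rw [hLlen] at this
            simp only [hT, hszdef, hcls, hg]
            simp only [hg] at this
            exact this
          have hTex : ∃ e ∈ T, sz (g 0) - 1 ≤ e := by
            by_contra hcon
            push_neg at hcon
            have hsubT : T ⊆ Finset.range (sz (g 0) - 1) :=
              fun i hi => Finset.mem_range.mpr (hcon i hi)
            have := Finset.card_le_card hsubT
            rw [hTcard, Finset.card_range] at this
            omega
          obtain ⟨e, heT, he⟩ := hTex
          rw [hT, Finset.mem_filter, Finset.mem_range] at heT
          have hae : a ≤ e := by omega
          have k1 : key (g 0) ≤ key (g a) := Kmono 0 a (Nat.zero_le _) (by omega)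
          have k2 : key (g a) ≤ key (g e) := Kmono a e hae heT.1
          have k3 : key (g e) = key (g 0) := (hkey_iff _ _).mpr (hsymm heT.2)
          exact h0 (by omega)
    -- build the interleaved Hamilton oriented path
    set σ : ℕ → ℕ := fun j => if j % 2 = 0 then j / 2 else h + j / 2 with hσ
    have hσlt : ∀ j, j < n → σ j < n := by
      intro j hj
      simp only [hσ]
      split_ifs <;> omega
    have hσinj : ∀ j1, j1 < n → ∀ j2, j2 < n → σ j1 = σ j2 → j1 = j2 := by
      intro j1 h1 j2 h2 he
      simp only [hσ] at he
      split_ifs at he <;> omega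
    have hσsurj : ∀ i, i < n → ∃ j, j < n ∧ σ j = i := by
      intro i hi
      rcases lt_or_ge i h with hih | hih
      · exact ⟨2 * i, by omega, by simp only [hσ]; rw [if_pos (by omega)]; omega⟩
      · exact ⟨2 * (i - h) + 1, by omega, by
          simp only [hσ]; rw [if_neg (by omega)]; omega⟩
    set M : List V := (List.range n).map (fun j => g (σ j)) with hM
    have hMlen : M.length = n := by simp [hM]
    have hMget : ∀ (i : ℕ) (hi : i < n), M[i]'(by omega) = g (σ i) := by
      intro i hi
      simp [hM]
    refine ⟨M, ?_, ?_, ?_⟩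
    · apply List.Nodup.map_on ?_ (List.nodup_range (n := n))
      intro j1 hj1 j2 hj2 hje
      rw [List.mem_range] at hj1 hj2
      exact hσinj j1 hj1 j2 hj2
        (hginj _ _ (hσlt _ hj1) (hσlt _ hj2) hje)
    · intro v
      obtain ⟨i, hi, hiv⟩ := List.mem_iff_getElem.mp (hLmem v)
      have hin : i < n := by omega
      obtain ⟨j, hj, hji⟩ := hσsurj i hin
      refine List.mem_map.mpr ⟨j, List.mem_range.mpr hj, ?_⟩
      rw [hji, hgel i hin]
      exact hiv
    · intro p hp
      obtain ⟨j, hj1, rfl⟩ := mem_pathPairs_iff.mp hp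
      have hj1n : j + 1 < n := by omega
      have e1 : M[j]'(by omega) = g (σ j) := hMget j (by omega)
      have e2 : M[j+1]'(by omega) = g (σ (j+1)) := hMget (j+1) (by omega)
      simp only [e1, e2]
      by_cases hpar : j % 2 = 0
      · have hσj : σ j = j / 2 := by simp only [hσ]; rw [if_pos hpar]
        have hσj1 : σ (j + 1) = h + j / 2 := by
          simp only [hσ]; rw [if_neg (by omega)]; omega
        have hcr := hcross (j / 2) (h + j / 2) (by omega) (by omega)
          (Or.inl (by omega))
        rw [hσj, hσj1]
        exact hadj hcr
      · have hσj : σ j = h + j / 2 := by simp only [hσ]; rw [if_neg hpar]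
        have hσj1 : σ (j + 1) = j / 2 + 1 := by
          simp only [hσ]; rw [if_pos (by omega)]; omega
        have hcr := hcross (j / 2 + 1) (h + j / 2) (by omega) (by omega)
          (Or.inr ⟨by omega, by omega, by omega⟩)
        rw [hσj, hσj1]
        exact (hadj hcr).symm
end

section
/- Every connected locally semicomplete digraph has a Hamilton directed path. -/
/-- `A` is a locally semicomplete digraph. -/
def LocallySemicomplete {V : Type*} (A : V → V → Prop) : Prop :=
  Irreflexive A ∧
  (∀ x y z : V, A x y → A x z → y ≠ z → A y z ∨ A z y) ∧
  (∀ x y z : V, A y x → A z x → y ≠ z → A y z ∨ A z y)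

/-- The digraph `A` is connected (its underlying graph is connected). -/
def UConn {V : Type*} (A : V → V → Prop) : Prop :=
  ∀ x y : V, Relation.ReflTransGen (fun a b => A a b ∨ A b a) x y

/-- Forward propagation: if `A p y` and `y` is off the path `p :: l2`, then `y`
can be inserted into the path, keeping `p` at the front. -/
lemma extA {V : Type*} (A : V → V → Prop)
    (h2 : ∀ x y z : V, A x y → A x z → y ≠ z → A y z ∨ A z y) :
    ∀ (l2 : List V) (p y : V), List.Chain' A (p :: l2) → A p y → y ∉ p :: l2 →
      ∃ m : List V, List.Chain' A (p :: m) ∧ (p :: m).Perm (y :: p :: l2) := by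
  intro l2
  induction l2 with
  | nil =>
    intro p y _ hpy _
    exact ⟨[y], List.isChain_pair.mpr hpy, List.Perm.swap y p []⟩
  | cons q l2' ih =>
    intro p y hc hpy hy
    have hpq : A p q := (List.isChain_cons_cons.mp hc).1
    have hc' : List.Chain' A (q :: l2') := (List.isChain_cons_cons.mp hc).2
    have hyq : y ≠ q := by
      intro h; exact hy (by simp [h])
    rcases h2 p y q hpy hpq hyq with hyq' | hqy
    · -- insert y between p and q
      refine ⟨y :: q :: l2', ?_, ?_⟩
      · exact List.isChain_cons_cons.mpr ⟨hpy, List.isChain_cons_cons.mpr ⟨hyq', hc'⟩⟩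
      · exact List.Perm.swap y p (q :: l2')
    · -- A q y : push forward
      obtain ⟨m, hm, hperm⟩ := ih q y hc' hqy (by
        intro h; exact hy (by simpa using Or.inr h))
      refine ⟨q :: m, ?_, ?_⟩
      · refine List.IsChain.cons hm ?_
        intro z hz
        have : (q :: m).head? = some q := rfl
        rw [this] at hz
        cases hz
        exact hpq
      · exact (List.Perm.cons p hperm).trans (List.Perm.swap y p _)

/-- If `y` is off the path `l` and there is an arc from some `p ∈ l` to `y`,
then there is a path through all of `l` and `y`. -/
lemma extArc {V : Type*} (A : V → V → Prop)
    (h2 : ∀ x y z : V, A x y → A x z → y ≠ z → A y z ∨ A z y)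
    (l : List V) (y p : V) (hc : List.Chain' A l) (hy : y ∉ l) (hp : p ∈ l)
    (hpy : A p y) : ∃ l' : List V, List.Chain' A l' ∧ l'.Perm (y :: l) := by
  obtain ⟨l1, l2, rfl⟩ := List.append_of_mem hp
  rw [List.Chain', List.isChain_append] at hc
  obtain ⟨hc1, hc2, hj⟩ := hc
  obtain ⟨m, hm, hperm⟩ := extA A h2 l2 p y hc2 hpy (by
    intro h; exact hy (List.mem_append.mpr (Or.inr h)))
  refine ⟨l1 ++ p :: m, ?_, ?_⟩
  · rw [List.Chain', List.isChain_append]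
    exact ⟨hc1, hm, fun x hx z hz => hj x hx z (by simpa using hz)⟩
  · exact (List.Perm.append_left l1 hperm).trans List.perm_middle

/-- The symmetric version: an arc from `y` into the path also works, by
reversing the digraph. -/
lemma extArc' {V : Type*} (A : V → V → Prop)
    (h3 : ∀ x y z : V, A y x → A z x → y ≠ z → A y z ∨ A z y)
    (l : List V) (y p : V) (hc : List.Chain' A l) (hy : y ∉ l) (hp : p ∈ l)
    (hyp : A y p) : ∃ l' : List V, List.Chain' A l' ∧ l'.Perm (y :: l) := by
  have h2' : ∀ x y z : V, flip A x y → flip A x z → y ≠ z → flip A y z ∨ flip A z y := by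
    intro x a b hax hbx hab
    exact (h3 x a b hax hbx hab).symm
  obtain ⟨l'', hch, hperm⟩ := extArc (flip A) h2' l.reverse y p
    (List.isChain_reverse.mpr (by simpa [Function.flip_def, List.Chain'] using hc))
    (by simpa using hy) (by simpa using hp) hyp
  refine ⟨l''.reverse, ?_, ?_⟩
  · rw [List.Chain', List.isChain_reverse]; simpa [Function.flip_def, List.Chain'] using hch
  · exact (l''.reverse_perm.trans hperm).trans (List.Perm.cons y l.reverse_perm)

/-- Via a walk in the underlying graph from a vertex off `l` to a vertex of
`l`, find a vertex `y ∉ l` with an arc to/from some `p ∈ l`. -/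
lemma find_adj {V : Type*} (A : V → V → Prop) (l : List V) (v h : V)
    (hh : h ∈ l)
    (walk : Relation.ReflTransGen (fun a b => A a b ∨ A b a) v h) :
    v ∉ l → ∃ y p, y ∉ l ∧ p ∈ l ∧ (A y p ∨ A p y) := by
  induction walk using Relation.ReflTransGen.head_induction_on with
  | refl => intro hv; exact absurd hh hv
  | head hab _ ih =>
    rename_i a c _
    intro ha
    by_cases hcl : c ∈ l
    · exact ⟨a, c, ha, hcl, hab⟩
    · exact ih hcl

/-- Any directed path can be grown to a Hamilton directed path. -/
lemma grow {V : Type*} [Fintype V] (A : V → V → Prop)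
    (hLSC : LocallySemicomplete A) (hconn : UConn A) :
    ∀ (n : ℕ) (l : List V), Fintype.card V - l.length ≤ n → l.Nodup →
      l.Chain' A → ∃ l' : List V, l'.Nodup ∧ (∀ v : V, v ∈ l') ∧ l'.Chain' A := by
  obtain ⟨_, h2, h3⟩ := hLSC
  intro n
  induction n with
  | zero =>
    intro l hn hnd hch
    classical
    refine ⟨l, hnd, fun v => ?_, hch⟩
    have hcard : Fintype.card V ≤ l.length := Nat.le_of_sub_eq_zero (Nat.le_zero.mp hn)
    have : l.toFinset = Finset.univ := by
      apply Finset.eq_univ_of_card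
      rw [List.toFinset_card_of_nodup hnd]
      exact le_antisymm (hnd.length_le_card) hcard
    rw [← List.mem_toFinset, this]
    exact Finset.mem_univ v
  | succ n ih =>
    intro l hn hnd hch
    by_cases hall : ∀ v : V, v ∈ l
    · exact ⟨l, hnd, hall, hch⟩
    · push_neg at hall
      obtain ⟨v, hv⟩ := hall
      cases l with
      | nil =>
        have hpos : 1 ≤ Fintype.card V := Fintype.card_pos_iff.mpr ⟨v⟩
        simp only [List.length_nil, Nat.sub_zero] at hn
        exact ih [v] (by simp only [List.length_cons, List.length_nil]; omega)
          (List.nodup_singleton v) (List.isChain_singleton v)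
      | cons h0 rest =>
        have hh0 : h0 ∈ h0 :: rest := List.mem_cons_self
        obtain ⟨y, p, hyL, hpL, harc⟩ :=
          find_adj A (h0 :: rest) v h0 hh0 (hconn v h0) hv
        have hext : ∃ l' : List V, List.Chain' A l' ∧ l'.Perm (y :: h0 :: rest) := by
          rcases harc with hyp | hpy
          · exact extArc' A h3 _ y p hch hyL hpL hyp
          · exact extArc A h2 _ y p hch hyL hpL hpy
        obtain ⟨l', hch', hperm⟩ := hext
        have hnd' : l'.Nodup := hperm.nodup_iff.mpr (List.nodup_cons.mpr ⟨hyL, hnd⟩)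
        have hlen : l'.length = (h0 :: rest).length + 1 := by
          rw [hperm.length_eq]; rfl
        refine ih l' ?_ hnd' hch'
        have hle : l'.length ≤ Fintype.card V := hnd'.length_le_card
        omega

/-- Bang-Jensen: every connected locally semicomplete digraph
has a Hamilton directed path. -/
theorem statement12 {V : Type*} [Fintype V] (A : V → V → Prop)
    (hLSC : LocallySemicomplete A) (hconn : UConn A) :
    ∃ l : List V, l.Nodup ∧ (∀ v : V, v ∈ l) ∧ l.Chain' A := by
  exact grow A hLSC hconn (Fintype.card V) [] (by simp) List.nodup_nil List.isChain_nil
end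

section
/- Every strong locally semicomplete digraph on at least 2 vertices has a Hamilton directed cycle. -/
/-- The digraph `A` is strong. -/
def IsStrong {V : Type*} (A : V → V → Prop) : Prop :=
  ∀ x y : V, Relation.ReflTransGen A x y

section
variable {V : Type*} {A : V → V → Prop}

def IsCyc (A : V → V → Prop) (l : List V) : Prop :=
  2 ≤ l.length ∧ l.Nodup ∧
    ∀ (i : ℕ) (h1 : i < l.length) (h2 : (i + 1) % l.length < l.length),
      A l[i] l[(i + 1) % l.length]

lemma IsCyc.arc {l : List V} (h : IsCyc A l) {i j : ℕ} (hi : i < l.length)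
    (hj : j < l.length) (hij : j = (i + 1) % l.length) : A (l[i]'hi) (l[j]'hj) := by
  subst hij; exact h.2.2 i hi hj

lemma isCyc_rotate {l : List V} (h : IsCyc A l) (k : ℕ) : IsCyc A (l.rotate k) := by
  obtain ⟨hlen, hnd, harc⟩ := h
  have hn : 0 < l.length := by omega
  refine ⟨by simpa using hlen, List.nodup_rotate.2 hnd, ?_⟩
  intro i h1 h2
  rw [List.getElem_rotate, List.getElem_rotate]
  refine IsCyc.arc ⟨hlen, hnd, harc⟩ _ _ ?_
  rw [List.length_rotate]
  rw [Nat.mod_add_mod, Nat.mod_add_mod]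
  congr 1
  omega

lemma isCyc_append {l p : List V} (h : IsCyc A l) (hl : l ≠ []) (hp : p ≠ [])
    (hpnd : p.Nodup) (hdisj : ∀ x ∈ p, x ∉ l) (hch : p.Chain' A)
    (hin : A (l.getLast hl) (p.head hp)) (hout : A (p.getLast hp) (l.head hl)) :
    IsCyc A (l ++ p) := by
  obtain ⟨hlen, hnd, harc⟩ := h
  have ha : 0 < l.length := by omega
  have hb : 0 < p.length := List.length_pos_iff.2 hp
  have hnod : (l ++ p).Nodup := by
    rw [List.nodup_append]
    exact ⟨hnd, hpnd, fun x hx y hy hxy => hdisj y hy (hxy ▸ hx)⟩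
  refine ⟨by simp; omega, hnod, ?_⟩
  have hL : (l ++ p).length = l.length + p.length := List.length_append
  intro i h1 h2
  rcases lt_trichotomy (i+1) l.length with hc | hc | hc
  · have e1 : (i + 1) % (l ++ p).length = i + 1 := Nat.mod_eq_of_lt (by omega)
    have g1 : (l ++ p)[i] = l[i]'(by omega) := List.getElem_append_left (by omega)
    have g2 : (l ++ p)[(i+1) % (l ++ p).length]'h2 = l[i+1]'(by omega) := by
      simp only [e1]; exact List.getElem_append_left (by omega)
    rw [g1, g2]
    exact IsCyc.arc ⟨hlen, hnd, harc⟩ _ _ (by rw [Nat.mod_eq_of_lt (by omega)])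
  · have e1 : (i + 1) % (l ++ p).length = l.length := by
      rw [hc]; exact Nat.mod_eq_of_lt (by omega)
    have g1 : (l ++ p)[i] = l[i]'(by omega) := List.getElem_append_left (by omega)
    have g2 : (l ++ p)[(i+1) % (l ++ p).length]'h2 = p[0]'hb := by
      simp only [e1]; rw [List.getElem_append_right (le_refl _)]; congr 1; omega
    rw [g1, g2]
    have e3 : l[i]'(by omega) = l.getLast hl := by
      have : i = l.length - 1 := by omega
      subst this; exact (List.getLast_eq_getElem hl).symm
    have e4 : p[0]'hb = p.head hp := (List.head_eq_getElem_zero hp).symm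
    rw [e3, e4]; exact hin
  · rcases lt_or_eq_of_le (Nat.succ_le_of_lt h1) with hd | hd
    · -- both indices in p
      have e1 : (i + 1) % (l ++ p).length = i + 1 := Nat.mod_eq_of_lt hd
      have g1 : (l ++ p)[i] = p[i - l.length]'(by omega) :=
        List.getElem_append_right (by omega)
      have g2 : (l ++ p)[(i+1) % (l ++ p).length]'h2 = p[i + 1 - l.length]'(by omega) := by
        simp only [e1]; exact List.getElem_append_right (by omega)
      rw [g1, g2]
      have := List.isChain_iff_getElem.1 hch (i - l.length) (by omega)
      have e5 : i + 1 - l.length = i - l.length + 1 := by omega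
      simp only [e5]
      exact this
    · -- wrap around
      have hd' : i + 1 = (l ++ p).length := hd
      have e1 : (i + 1) % (l ++ p).length = 0 := by rw [hd']; exact Nat.mod_self _
      have g1 : (l ++ p)[i] = p[i - l.length]'(by omega) :=
        List.getElem_append_right (by omega)
      have g2 : (l ++ p)[(i+1) % (l ++ p).length]'h2 = l[0]'ha := by
        simp only [e1]; exact List.getElem_append_left ha
      rw [g1, g2]
      have e3 : p[i - l.length]'(by omega) = p.getLast hp := by
        have : i - l.length = p.length - 1 := by omega
        simp only [this]; exact (List.getLast_eq_getElem hp).symm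
      have e4 : l[0]'ha = l.head hl := (List.head_eq_getElem_zero hl).symm
      rw [e3, e4]; exact hout

/-- extract a nodup path from reachability -/
lemma path_exists {u w : V} (h : Relation.ReflTransGen A u w) :
    ∃ p : List V, p.Nodup ∧ p.Chain' A ∧ p.head? = some u ∧ p.getLast? = some w := by
  induction h using Relation.ReflTransGen.head_induction_on with
  | refl => exact ⟨[w], by simp, by simp [List.Chain'], by simp, by simp⟩
  | head hab _ ih =>
    rename_i a b _
    obtain ⟨p, hnd, hch, hh, hl⟩ := ih
    by_cases hmem : a ∈ p
    · -- take the suffix starting at a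
      obtain ⟨s, t, rfl⟩ := List.append_of_mem hmem
      refine ⟨a :: t, ?_, ?_, by simp, ?_⟩
      · exact (List.nodup_append.1 hnd).2.1
      · exact hch.suffix ⟨s, rfl⟩
      · rwa [List.getLast?_append_cons] at hl
    · refine ⟨a :: p, ?_, ?_, by simp, ?_⟩
      · exact List.nodup_cons.2 ⟨hmem, hnd⟩
      · refine List.isChain_cons.2 ⟨?_, hch⟩
        intro y hy
        cases p with
        | nil => simp at hy
        | cons c cs =>
            simp at hh hy
            subst hh; subst hy; exact hab
      · cases p with
        | nil => simp at hl
        | cons c cs => rw [List.getLast?_cons_cons]; exact hl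

/-- a chain starting in S and ending outside S has a crossing arc -/
lemma crossing (S : V → Prop) :
    ∀ (p : List V), p.Chain' A → ∀ (hp : p ≠ []), S (p.head hp) → ¬ S (p.getLast hp) →
      ∃ x y, S x ∧ ¬ S y ∧ A x y := by
  intro p
  induction p with
  | nil => intro _ hp; exact absurd rfl hp
  | cons a rest ih =>
    intro hch hp hhd hlst
    cases rest with
    | nil => simp at hhd hlst; exact absurd hhd hlst
    | cons b bs =>
      by_cases hSb : S b
      · refine ih (List.isChain_cons_cons.1 hch).2 (by simp) (by simpa using hSb) ?_
        simpa [List.getLast_cons] using hlst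
      · exact ⟨a, b, by simpa using hhd, hSb, (List.isChain_cons_cons.1 hch).1⟩

/-- split a list at the first element satisfying S -/
lemma split_first (S : V → Prop) :
    ∀ (p : List V) (hp : p ≠ []), ¬ S (p.head hp) → S (p.getLast hp) →
      ∃ q y r, p = q ++ y :: r ∧ q ≠ [] ∧ (∀ x ∈ q, ¬ S x) ∧ S y := by
  intro p
  induction p with
  | nil => intro hp; exact absurd rfl hp
  | cons a rest ih =>
    intro hp hhd hlst
    cases rest with
    | nil => simp at hhd hlst; exact absurd hlst hhd
    | cons b bs =>
      by_cases hSb : S b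
      · exact ⟨[a], b, bs, by simp, by simp, by simpa using hhd, hSb⟩
      · obtain ⟨q, y, r, heq, hq, hqa, hy⟩ :=
          ih (by simp) (by simpa using hSb) (by simpa [List.getLast_cons] using hlst)
        refine ⟨a :: q, y, r, by rw [heq]; rfl, by simp, ?_, hy⟩
        intro x hx
        rcases List.mem_cons.1 hx with rfl | hx
        · simpa using hhd
        · exact hqa x hx

lemma acl {l : List V} {u : V} {i j : ℕ} (e : i = j) {hi : i < l.length}
    {hj : j < l.length} (h : A (l[i]'hi) u) : A (l[j]'hj) u := by subst e; exact h

lemma acr {l : List V} {u : V} {i j : ℕ} (e : i = j) {hi : i < l.length}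
    {hj : j < l.length} (h : A u (l[i]'hi)) : A u (l[j]'hj) := by subst e; exact h

lemma insert_prop (hA : LocallySemicomplete A) {l : List V} (h : IsCyc A l) {u : V}
    (hu : u ∉ l) :
    ∀ (d i : ℕ) (hi : i < l.length)
      (hd : (i + d) % l.length < l.length),
      A (l[i]'hi) u → A u (l[(i + d) % l.length]'hd) → 1 ≤ d →
      ∃ m, ∃ (hm : m < l.length) (hm1 : (m + 1) % l.length < l.length),
        A (l[m]'hm) u ∧ A u (l[(m + 1) % l.length]'hm1) := by
  have hn : 0 < l.length := by have := h.1; omega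
  intro d
  induction d with
  | zero => intro i hi hd _ _ hge; omega
  | succ d ih =>
    intro i hi hd hiu hui _
    rcases Nat.eq_zero_or_pos d with rfl | hd1
    · exact ⟨i, hi, hd, hiu, hui⟩
    · have hj : (i + 1) % l.length < l.length := Nat.mod_lt _ hn
      have harc : A (l[i]'hi) (l[(i + 1) % l.length]'hj) := h.arc hi hj rfl
      have hne : u ≠ l[(i + 1) % l.length]'hj := by
        intro he; exact hu (he ▸ List.getElem_mem hj)
      rcases hA.2.1 _ _ _ hiu harc hne with h1 | h1
      · exact ⟨i, hi, hj, hiu, h1⟩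
      · have e : (i + (d + 1)) % l.length = ((i + 1) % l.length + d) % l.length := by
          rw [Nat.mod_add_mod ((i : ℕ) + 1) l.length d]
          congr 1
          omega
        exact ih ((i + 1) % l.length) hj (Nat.mod_lt _ hn) h1 (acr e hui) hd1

lemma all_in (hA : LocallySemicomplete A) {l : List V} (h : IsCyc A l) {u : V}
    (hu : u ∉ l) (hno : ∀ y ∈ l, ¬ A u y) {i0 : ℕ} (hi0 : i0 < l.length)
    (h0 : A (l[i0]'hi0) u) : ∀ x ∈ l, A x u := by
  have hn : 0 < l.length := by have := h.1; omega
  have key : ∀ d, ∀ (hd : (i0 + d) % l.length < l.length), A (l[(i0 + d) % l.length]'hd) u := by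
    intro d
    induction d with
    | zero =>
      intro hd
      exact acl (show i0 = (i0 + 0) % l.length by
        rw [Nat.add_zero]; exact (Nat.mod_eq_of_lt hi0).symm) h0
    | succ d ih =>
      intro hd
      have hm : (i0 + d) % l.length < l.length := Nat.mod_lt _ hn
      have hx := ih hm
      have hj : ((i0 + d) % l.length + 1) % l.length < l.length := Nat.mod_lt _ hn
      have harc := h.arc hm hj rfl
      have hne : u ≠ l[((i0 + d) % l.length + 1) % l.length]'hj := by
        intro he; exact hu (he ▸ List.getElem_mem hj)
      have e : ((i0 + d) % l.length + 1) % l.length = (i0 + (d + 1)) % l.length := by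
        rw [Nat.mod_add_mod (i0 + d) l.length 1, Nat.add_assoc]
      rcases hA.2.1 _ _ _ hx harc hne with h1 | h1
      · exact absurd h1 (hno _ (List.getElem_mem hj))
      · exact acl e h1
  intro x hx
  obtain ⟨j, hj, rfl⟩ := List.mem_iff_getElem.1 hx
  have cover : ∃ d, (i0 + d) % l.length = j := by
    rcases le_or_gt i0 j with hle | hlt
    · exact ⟨j - i0, by rw [show i0 + (j - i0) = j by omega]; exact Nat.mod_eq_of_lt hj⟩
    · refine ⟨j + l.length - i0, ?_⟩
      rw [show i0 + (j + l.length - i0) = j + l.length by omega, Nat.add_mod_right]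
      exact Nat.mod_eq_of_lt hj
  obtain ⟨d, e⟩ := cover
  exact acl e (key d (Nat.mod_lt _ hn))

lemma all_out (hA : LocallySemicomplete A) {l : List V} (h : IsCyc A l) {u : V}
    (hu : u ∉ l) (hno : ∀ y ∈ l, ¬ A y u) {j0 : ℕ} (hj0 : j0 < l.length)
    (h0 : A u (l[j0]'hj0)) : ∀ x ∈ l, A u x := by
  have hn : 0 < l.length := by have := h.1; omega
  have key : ∀ d, d ≤ l.length → ∀ (hd : (j0 + l.length - d) % l.length < l.length),
      A u (l[(j0 + l.length - d) % l.length]'hd) := by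
    intro d
    induction d with
    | zero =>
      intro _ hd
      refine acr (show j0 = (j0 + l.length - 0) % l.length from ?_) h0
      rw [show j0 + l.length - 0 = j0 + l.length by omega, Nat.add_mod_right]
      exact (Nat.mod_eq_of_lt hj0).symm
    | succ d ih =>
      intro hdle hd
      have hm : (j0 + l.length - d) % l.length < l.length := Nat.mod_lt _ hn
      have hx := ih (by omega) hm
      have hp : ((j0 + l.length - d) % l.length + (l.length - 1)) % l.length < l.length :=
        Nat.mod_lt _ hn
      have ep : (((j0 + l.length - d) % l.length + (l.length - 1)) % l.length + 1) % l.length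
          = (j0 + l.length - d) % l.length := by
        rw [Nat.mod_add_mod (j0 + l.length - d) l.length (l.length - 1),
          Nat.mod_add_mod (j0 + l.length - d + (l.length - 1)) l.length 1,
          show j0 + l.length - d + (l.length - 1) + 1 = (j0 + l.length - d) + l.length by omega,
          Nat.add_mod_right]
      have harc := h.arc hp hm ep.symm
      have hne : u ≠ l[((j0 + l.length - d) % l.length + (l.length - 1)) % l.length]'hp := by
        intro he; exact hu (he ▸ List.getElem_mem hp)
      rcases hA.2.2 _ _ _ hx harc hne with h1 | h1
      · refine acr (show ((j0 + l.length - d) % l.length + (l.length - 1)) % l.length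
            = (j0 + l.length - (d + 1)) % l.length from ?_) h1
        rw [Nat.mod_add_mod (j0 + l.length - d) l.length (l.length - 1),
          show j0 + l.length - d + (l.length - 1) = (j0 + l.length - (d+1)) + l.length by omega,
          Nat.add_mod_right]
      · exact absurd h1 (hno _ (List.getElem_mem hp))
  intro x hx
  obtain ⟨j, hj, rfl⟩ := List.mem_iff_getElem.1 hx
  have cover : ∃ d, d ≤ l.length ∧ (j0 + l.length - d) % l.length = j := by
    rcases le_or_gt j j0 with hle | hlt
    · refine ⟨j0 - j, by omega, ?_⟩
      rw [show j0 + l.length - (j0 - j) = j + l.length by omega, Nat.add_mod_right]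
      exact Nat.mod_eq_of_lt hj
    · refine ⟨j0 + l.length - j, by omega, ?_⟩
      rw [show j0 + l.length - (j0 + l.length - j) = j by omega]
      exact Nat.mod_eq_of_lt hj
  obtain ⟨d, hdle, e⟩ := cover
  exact acr e (key d hdle (Nat.mod_lt _ hn))


lemma gidx {l : List V} {i j : ℕ} (e : i = j) {hi : i < l.length} {hj : j < l.length} :
    l[i]'hi = l[j]'hj := by subst e; rfl

/-- insertion dichotomy for a vertex with an in-neighbour on the cycle -/
lemma dich_in (hA : LocallySemicomplete A) {l : List V} (h : IsCyc A l) {u : V}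
    (hu : u ∉ l) {x : V} (hx : x ∈ l) (hxu : A x u) :
    (∃ m, ∃ (hm : m < l.length) (hm1 : (m + 1) % l.length < l.length),
        A (l[m]'hm) u ∧ A u (l[(m + 1) % l.length]'hm1)) ∨
      (∀ y ∈ l, A y u ∧ ¬ A u y) := by
  have hn : 0 < l.length := by have := h.1; omega
  by_cases hout : ∃ y ∈ l, A u y
  · left
    obtain ⟨y, hy, huy⟩ := hout
    obtain ⟨i, hi, rfl⟩ := List.mem_iff_getElem.1 hx
    obtain ⟨j, hj, rfl⟩ := List.mem_iff_getElem.1 hy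
    have cover : ∃ d, 1 ≤ d ∧ (i + d) % l.length = j := by
      rcases lt_trichotomy i j with hc | hc | hc
      · exact ⟨j - i, by omega, by rw [show i + (j - i) = j by omega]; exact Nat.mod_eq_of_lt hj⟩
      · refine ⟨l.length, by omega, ?_⟩
        rw [Nat.add_mod_right]; rw [Nat.mod_eq_of_lt hi, hc]
      · refine ⟨j + l.length - i, by omega, ?_⟩
        rw [show i + (j + l.length - i) = j + l.length by omega, Nat.add_mod_right]
        exact Nat.mod_eq_of_lt hj
    obtain ⟨d, hd1, e⟩ := cover
    exact insert_prop hA h hu d i hi (Nat.mod_lt _ hn) hxu (acr e.symm huy) hd1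
  · right
    push_neg at hout
    obtain ⟨i, hi, rfl⟩ := List.mem_iff_getElem.1 hx
    intro y hy
    exact ⟨all_in hA h hu hout hi hxu y hy, hout y hy⟩

/-- insertion dichotomy for a vertex with an out-neighbour on the cycle -/
lemma dich_out (hA : LocallySemicomplete A) {l : List V} (h : IsCyc A l) {u : V}
    (hu : u ∉ l) {x : V} (hx : x ∈ l) (hux : A u x) :
    (∃ m, ∃ (hm : m < l.length) (hm1 : (m + 1) % l.length < l.length),
        A (l[m]'hm) u ∧ A u (l[(m + 1) % l.length]'hm1)) ∨
      (∀ y ∈ l, A u y ∧ ¬ A y u) := by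
  have hn : 0 < l.length := by have := h.1; omega
  by_cases hin : ∃ y ∈ l, A y u
  · obtain ⟨y, hy, hyu⟩ := hin
    exact Or.inl ((dich_in hA h hu hy hyu).resolve_right
      (fun hall => (hall x hx).2 hux))
  · right
    push_neg at hin
    obtain ⟨j, hj, rfl⟩ := List.mem_iff_getElem.1 hx
    intro y hy
    exact ⟨all_out hA h hu hin hj hux y hy, hin y hy⟩

/-- insertion produces a strictly longer cycle -/
lemma insertion_cycle {l : List V} (h : IsCyc A l) {u : V} (hu : u ∉ l) {m : ℕ}
    (hm : m < l.length) (hm1 : (m + 1) % l.length < l.length)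
    (h1 : A (l[m]'hm) u) (h2 : A u (l[(m + 1) % l.length]'hm1)) :
    ∃ l', IsCyc A l' ∧ l.length < l'.length := by
  have hn : 0 < l.length := by omega
  have hrot := isCyc_rotate h (m + 1)
  have hrl : l.rotate (m + 1) ≠ [] := by
    intro he; have := List.length_rotate l (m + 1); rw [he] at this; simp at this; omega
  refine ⟨l.rotate (m + 1) ++ [u], ?_, by simp⟩
  refine isCyc_append hrot hrl (by simp) (by simp) ?_ (by simp [List.Chain']) ?_ ?_
  · intro x hx
    simp at hx; subst hx
    rw [List.mem_rotate]; exact hu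
  · -- A (rotate.getLast) u ; getLast of rotate = l[m]
    have e : (l.rotate (m + 1)).getLast hrl = l[m]'hm := by
      rw [List.getLast_eq_getElem, List.getElem_rotate]
      refine gidx ?_
      rw [List.length_rotate, show l.length - 1 + (m + 1) = m + l.length by omega,
        Nat.add_mod_right]
      exact Nat.mod_eq_of_lt hm
    rw [e]; simpa using h1
  · -- A u (rotate.head)
    have e : (l.rotate (m + 1)).head hrl = l[(m + 1) % l.length]'hm1 := by
      rw [List.head_eq_getElem_zero, List.getElem_rotate]
      exact gidx (by rw [Nat.zero_add])
    simp only [List.getLast_singleton]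
    rw [e]; exact h2

/-- the key step: a non-Hamilton cycle can be lengthened -/
lemma step (hA : LocallySemicomplete A) (hstrong : ∀ x y : V, Relation.ReflTransGen A x y)
    {l : List V} (h : IsCyc A l) {v : V} (hv : v ∉ l) :
    ∃ l', IsCyc A l' ∧ l.length < l'.length := by
  have hl : l ≠ [] := by intro he; rw [he] at h; exact absurd h.1 (by simp)
  -- find an arc leaving the cycle
  obtain ⟨p, pnd, pch, ph, plst⟩ := path_exists (A := A) (hstrong (l.head hl) v)
  have hp : p ≠ [] := by intro he; rw [he] at ph; simp at ph
  have hph : p.head hp = l.head hl := by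
    rw [List.head?_eq_head hp] at ph; exact Option.some_injective _ ph
  have hpl : p.getLast hp = v := by
    rw [List.getLast?_eq_getLast hp] at plst; exact Option.some_injective _ plst
  obtain ⟨x, u, hx, hu, hxu⟩ := crossing (fun z => z ∈ l) p pch hp
    (by rw [hph]; exact List.head_mem hl) (by rw [hpl]; exact hv)
  -- dichotomy for u
  rcases dich_in hA h hu hx hxu with ⟨m, hm, hm1, ha1, ha2⟩ | hT
  · exact insertion_cycle h hu hm hm1 ha1 ha2
  -- u is dominated by all of the cycle; find a path back to the cycle
  obtain ⟨q0, qnd0, qch0, qh0, qlst0⟩ := path_exists (A := A) (hstrong u (l.head hl))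
  have hq0 : q0 ≠ [] := by intro he; rw [he] at qh0; simp at qh0
  have hq0h : q0.head hq0 = u := by
    rw [List.head?_eq_head hq0] at qh0; exact Option.some_injective _ qh0
  have hq0l : q0.getLast hq0 = l.head hl := by
    rw [List.getLast?_eq_getLast hq0] at qlst0; exact Option.some_injective _ qlst0
  obtain ⟨q, y, r, heq, hq, hqout, hy⟩ := split_first (fun z => z ∈ l) q0 hq0
    (by rw [hq0h]; exact hu) (by rw [hq0l]; exact List.head_mem hl)
  -- properties of q
  have hqnd : q.Nodup := by rw [heq, List.nodup_append] at qnd0; exact qnd0.1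
  have hqch : q.Chain' A := qch0.prefix (by rw [heq]; exact ⟨y :: r, rfl⟩)
  have hqhead : q.head hq = u := by
    cases q with
    | nil => exact absurd rfl hq
    | cons a as =>
      have h2 : q0.head? = some a := by rw [heq]; rfl
      simp only [List.head_cons]
      exact Option.some_injective _ (h2.symm.trans qh0)
  set w := q.getLast hq with hw
  have hwq : w ∈ q := List.getLast_mem hq
  have hwnl : w ∉ l := hqout w hwq
  have hwy : A w y := by
    have := (List.isChain_append.1 (heq ▸ qch0)).2.2
    exact this w (by rw [List.getLast?_eq_getLast hq]; rfl) y rfl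
  rcases dich_out hA h hwnl hy hwy with ⟨m, hm, hm1, ha1, ha2⟩ | hS
  · exact insertion_cycle h hwnl hm hm1 ha1 ha2
  · -- append the whole path q to the cycle
    refine ⟨l ++ q, ?_, ?_⟩
    · refine isCyc_append h hl hq hqnd hqout hqch ?_ ?_
      · rw [hqhead]; exact (hT _ (List.getLast_mem hl)).1
      · exact (hS _ (List.head_mem hl)).1
    · have := List.length_pos_iff.2 hq
      simp; omega

/-- there is some cycle -/
lemma init (hA : LocallySemicomplete A) (hstrong : ∀ x y : V, Relation.ReflTransGen A x y)
    [Fintype V] (h2 : 2 ≤ Fintype.card V) : ∃ l : List V, IsCyc A l := by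
  obtain ⟨x, y, hxy⟩ := Fintype.exists_pair_of_one_lt_card (α := V) (by omega)
  rcases (hstrong x y).cases_head with he | ⟨z, hxz, _⟩
  · exact absurd he hxy
  have hzx : z ≠ x := fun he => hA.1 x (he ▸ hxz)
  obtain ⟨p, pnd, pch, ph, plst⟩ := path_exists (A := A) (hstrong z x)
  have hp : p ≠ [] := by intro he; rw [he] at ph; simp at ph
  have hph : p.head hp = z := by
    rw [List.head?_eq_head hp] at ph; exact Option.some_injective _ ph
  have hpl : p.getLast hp = x := by
    rw [List.getLast?_eq_getLast hp] at plst; exact Option.some_injective _ plst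
  have hlen : 2 ≤ p.length := by
    rcases p with _ | ⟨a, _ | ⟨b, t⟩⟩
    · exact absurd rfl hp
    · simp at hph hpl; exact absurd (hph.symm.trans hpl) hzx
    · simp
  refine ⟨p, hlen, pnd, ?_⟩
  intro i h1 h2'
  rcases lt_or_eq_of_le (Nat.succ_le_of_lt h1) with hc | hc
  · have e : (i + 1) % p.length = i + 1 := Nat.mod_eq_of_lt hc
    have := List.isChain_iff_getElem.1 pch i (by omega)
    exact acr e.symm this
  · have e : (i + 1) % p.length = 0 := by
      have : i + 1 = p.length := hc
      rw [this, Nat.mod_self]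
    have e1 : p[i]'h1 = x := by
      rw [← hpl, List.getLast_eq_getElem]; exact gidx (by omega)
    have e2 : p[(i + 1) % p.length]'h2' = z := by
      rw [← hph, List.head_eq_getElem_zero]; exact gidx e
    rw [e1, e2]; exact hxz

lemma isCyc_length_lt [Fintype V] {l : List V} (h : IsCyc A l) (hv : ∃ v : V, v ∉ l) :
    l.length < Fintype.card V := by
  classical
  rcases lt_or_eq_of_le h.2.1.length_le_card with hc | hc
  · exact hc
  · exfalso
    obtain ⟨v, hv⟩ := hv
    have : l.toFinset = Finset.univ :=
      Finset.eq_univ_of_card _ (by rw [List.toFinset_card_of_nodup h.2.1, hc])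
    exact hv (by rw [← List.mem_toFinset, this]; exact Finset.mem_univ v)


lemma isCyc_cycPairs {l : List V} (h : IsCyc A l) :
    ∀ pr ∈ l.zip (l.rotate 1), A pr.1 pr.2 := by
  intro pr hpr
  obtain ⟨i, hi, he⟩ := List.mem_iff_getElem.1 hpr
  have hlen : (l.zip (l.rotate 1)).length = l.length := by
    rw [List.length_zip, List.length_rotate, min_self]
  rw [hlen] at hi
  rw [List.getElem_zip] at he
  have hr : i < (l.rotate 1).length := by rw [List.length_rotate]; exact hi
  have e2 : (l.rotate 1)[i]'hr = l[(i + 1) % l.length]'(Nat.mod_lt _ (by omega)) := by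
    rw [List.getElem_rotate]
  rw [← he]
  simp only [e2]
  exact h.2.2 i hi (Nat.mod_lt _ (by omega))

lemma aux (hA : LocallySemicomplete A) (hstrong : ∀ x y : V, Relation.ReflTransGen A x y)
    [Fintype V] :
    ∀ (k : ℕ) (l : List V), IsCyc A l → Fintype.card V - l.length ≤ k →
      ∃ l', IsCyc A l' ∧ ∀ v : V, v ∈ l' := by
  intro k
  induction k with
  | zero =>
    intro l h hle
    refine ⟨l, h, ?_⟩
    by_contra hall
    push_neg at hall
    have := isCyc_length_lt h hall
    omega
  | succ k ih =>
    intro l h hle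
    by_cases hall : ∀ v : V, v ∈ l
    · exact ⟨l, h, hall⟩
    · push_neg at hall
      obtain ⟨v, hv⟩ := hall
      obtain ⟨l', h', hlt⟩ := step hA hstrong h hv
      have hcard := h'.2.1.length_le_card
      exact ih l' h' (by omega)
end


/-- Bang-Jensen: every strong locally semicomplete digraph on at
least `2` vertices has a Hamilton directed cycle. -/
theorem statement13 {V : Type*} [Fintype V] (A : V → V → Prop)
    (hLSC : LocallySemicomplete A) (hstrong : IsStrong A)
    (h2 : 2 ≤ Fintype.card V) :
    ∃ l : List V, 2 ≤ l.length ∧ l.Nodup ∧ (∀ v : V, v ∈ l) ∧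
      ∀ p ∈ cycPairs l, A p.1 p.2 := by
  obtain ⟨l0, h0⟩ := init hLSC hstrong h2
  obtain ⟨l, h, hall⟩ := aux hLSC hstrong (Fintype.card V) l0 h0 (by omega)
  exact ⟨l, h.1, h.2.1, hall, isCyc_cycPairs h⟩
end

section
/- Let D be a connected locally semicomplete digraph that is not strong, and let C_1, …, C_ℓ be the acyclic ordering of the strong components of D. Then every oriented (C_1, C_ℓ)-path P of D contains at least d(C_1, C_ℓ) forward arcs. -/
open Classical in
/-- The number of pairs in `ps` that are (forward) arcs of the digraph `A`. -/
noncomputable def fwd {V : Type*} (A : V → V → Prop) (ps : List (V × V)) : ℕ :=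
  (ps.filter fun p => decide (A p.1 p.2)).length

/-- `C 0, …, C (ℓ-1)` is an acyclic ordering of the strong components of `A`. -/
def IsSCCOrdering {V : Type*} (A : V → V → Prop) (ℓ : ℕ) (C : ℕ → Set V) : Prop :=
  (∀ v : V, ∃! i : ℕ, i < ℓ ∧ v ∈ C i) ∧
  (∀ i < ℓ, ∀ x ∈ C i, ∀ y : V,
    (y ∈ C i ↔ (Relation.ReflTransGen A x y ∧ Relation.ReflTransGen A y x))) ∧
  (∀ i j : ℕ, i < j → j < ℓ → ∀ x ∈ C j, ∀ y ∈ C i, ¬ A x y)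

/-- `p` is a directed `(S,T)`-path of the digraph `A`. -/
def IsSTPath {V : Type*} (A : V → V → Prop) (S T : Set V) (p : List V) : Prop :=
  p ≠ [] ∧ p.Nodup ∧ p.Chain' A ∧
  (∀ x ∈ p.head?, x ∈ S) ∧ (∀ x ∈ p.getLast?, x ∈ T) ∧
  (∀ x ∈ p.tail.dropLast, x ∉ S ∧ x ∉ T)

/-- `p` is an oriented `(S,T)`-path of the digraph `A`: consecutive vertices are
joined by an arc in at least one direction. -/
def IsOrientedSTPath {V : Type*} (A : V → V → Prop) (S T : Set V) (p : List V) : Prop :=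
  p ≠ [] ∧ p.Nodup ∧ (∀ q ∈ pathPairs p, A q.1 q.2 ∨ A q.2 q.1) ∧
  (∀ x ∈ p.head?, x ∈ S) ∧ (∀ x ∈ p.getLast?, x ∈ T) ∧
  (∀ x ∈ p.tail.dropLast, x ∉ S ∧ x ∉ T)

section Aux

variable {V : Type*}

lemma pathPairs_cons_cons (u v : V) (l : List V) :
    pathPairs (u :: v :: l) = (u, v) :: pathPairs (v :: l) := rfl

lemma pathPairs_append (l : List V) (x : V) (r : List V) :
    pathPairs (l ++ x :: r) = pathPairs (l ++ [x]) ++ pathPairs (x :: r) := by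
  induction l with
  | nil => rfl
  | cons u t ih =>
    cases t with
    | nil => rfl
    | cons v t' =>
      simp only [List.cons_append, pathPairs_cons_cons] at ih ⊢
      rw [ih]

lemma fwd_nil (A : V → V → Prop) : fwd A [] = 0 := rfl

lemma fwd_append (A : V → V → Prop) (p q : List (V × V)) :
    fwd A (p ++ q) = fwd A p + fwd A q := by
  simp [fwd, List.filter_append]

lemma fwd_cons_pos {A : V → V → Prop} {x y : V} (h : A x y) (l : List (V × V)) :
    fwd A ((x, y) :: l) = fwd A l + 1 := by
  simp [fwd, List.filter_cons, h]

lemma fwd_cons_neg {A : V → V → Prop} {x y : V} (h : ¬ A x y) (l : List (V × V)) :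
    fwd A ((x, y) :: l) = fwd A l := by
  simp [fwd, List.filter_cons, h]

lemma fwd_cons_le (A : V → V → Prop) (p : V × V) (l : List (V × V)) :
    fwd A (p :: l) ≤ fwd A l + 1 := by
  unfold fwd
  rw [List.filter_cons]
  split
  · simp
  · exact Nat.le_succ _

lemma chain'_pathPairs {A : V → V → Prop} :
    ∀ {l : List V}, l.Chain' A → ∀ q ∈ pathPairs l, A q.1 q.2 := by
  intro l
  induction l with
  | nil => intro _ q hq; simp [pathPairs] at hq
  | cons u t ih =>
    cases t with
    | nil => intro _ q hq; simp [pathPairs] at hq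
    | cons v t' =>
      intro h q hq
      obtain ⟨huv, h'⟩ := List.isChain_cons_cons.mp h
      rw [pathPairs_cons_cons, List.mem_cons] at hq
      rcases hq with rfl | hq
      · exact huv
      · exact ih h' q hq

lemma fwd_all {A : V → V → Prop} :
    ∀ (lp : List (V × V)), (∀ q ∈ lp, A q.1 q.2) → fwd A lp = lp.length := by
  intro lp
  induction lp with
  | nil => intro _; rfl
  | cons p lp ih =>
    intro hall
    rcases p with ⟨x, y⟩
    rw [fwd_cons_pos (hall _ (List.mem_cons_self)) lp,
      ih (fun q hq => hall q (List.mem_cons_of_mem _ hq))]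
    simp

lemma fwd_of_chain' {A : V → V → Prop} {l : List V} (h : l.Chain' A) :
    fwd A (pathPairs l) = l.length - 1 := by
  rw [fwd_all _ (chain'_pathPairs h)]
  simp only [pathPairs, List.length_zip, List.length_tail]
  omega

lemma mem_of_getLast?' {l : List V} {v : V} (h : l.getLast? = some v) : v ∈ l := by
  cases l with
  | nil => simp at h
  | cons u t =>
    rw [List.getLast?_eq_getLast (List.cons_ne_nil u t)] at h
    injection h with h
    rw [← h]
    exact List.getLast_mem _

lemma mem_tail_dropLast_iff {l : List V} (hnd : l.Nodup) {v : V} :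
    v ∈ l.tail.dropLast ↔ v ∈ l ∧ l.head? ≠ some v ∧ l.getLast? ≠ some v := by
  cases l with
  | nil => simp
  | cons u t =>
    cases t with
    | nil => simp [eq_comm]
    | cons w m =>
      have ht : (w :: m) ≠ [] := List.cons_ne_nil _ _
      have hrec : (w :: m).dropLast ++ [(w :: m).getLast ht] = w :: m :=
        List.dropLast_append_getLast ht
      obtain ⟨hu, hnt⟩ := List.nodup_cons.mp hnd
      have hnt2 : ((w :: m).dropLast ++ [(w :: m).getLast ht]).Nodup := by
        rw [hrec]; exact hnt
      constructor
      · intro hv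
        have hv' : v ∈ (w :: m).dropLast := hv
        have hvt : v ∈ w :: m := by
          rw [← hrec]; exact List.mem_append_left _ hv'
        refine ⟨List.mem_cons_of_mem u hvt, ?_, ?_⟩
        · simp only [List.head?_cons]
          intro h
          injection h with h
          exact hu (h ▸ hvt)
        · rw [List.getLast?_cons_cons, List.getLast?_eq_getLast ht]
          intro h
          injection h with h
          exact (List.nodup_append'.mp hnt2).2.2 hv' (by simp [← h])
      · rintro ⟨hv, h1, h2⟩
        have hvt : v ∈ w :: m := by
          rcases List.mem_cons.mp hv with hveq | hvt
          · exact absurd (hveq ▸ rfl) h1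
          · exact hvt
        rw [← hrec] at hvt
        rcases List.mem_append.mp hvt with h | h
        · exact h
        · exfalso
          apply h2
          rw [List.getLast?_cons_cons, List.getLast?_eq_getLast ht]
          simp only [List.mem_singleton] at h
          rw [h]

lemma firstBad {A : V → V → Prop} :
    ∀ {P : List V}, ¬ P.Chain' A →
      ∃ a x y l, P = a ++ x :: y :: l ∧ (a ++ [x]).Chain' A ∧ ¬ A x y := by
  intro P
  induction P with
  | nil => intro h; exact absurd List.isChain_nil h
  | cons u t ih =>
    cases t with
    | nil => intro h; exact absurd (List.isChain_singleton u) h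
    | cons v t' =>
      intro h
      by_cases huv : A u v
      · have h' : ¬ (v :: t').Chain' A := fun hc => h (List.isChain_cons_cons.mpr ⟨huv, hc⟩)
        obtain ⟨a, x, y, l, heq, hch, hxy⟩ := ih h'
        refine ⟨u :: a, x, y, l, by rw [List.cons_append, ← heq], ?_, hxy⟩
        rw [List.cons_append]; show List.IsChain A _; rw [List.isChain_cons]
        refine ⟨?_, hch⟩
        intro z hz
        cases a with
        | nil =>
          simp only [List.nil_append, List.head?_cons] at hz
          injection hz with hz
          have : v = x := by
            simpa using congrArg List.head? heq
          rw [← hz, ← this]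
          exact huv
        | cons a0 a1 =>
          simp only [List.cons_append, List.head?_cons] at hz
          injection hz with hz
          have : v = a0 := by
            simpa using congrArg List.head? heq
          rw [← hz, ← this]
          exact huv
      · exact ⟨[], u, v, t', rfl, List.isChain_singleton u, huv⟩

end Aux

/-- let `D` be a connected, non-strong locally semicomplete digraph
with acyclic ordering `C 0, …, C (ℓ-1)` of its strong components, and let `d` be the
minimum number of arcs of a directed `(C 0, C (ℓ-1))`-path.  Then every oriented
`(C 0, C (ℓ-1))`-path has at least `d` forward arcs. -/
theorem statement16 {V : Type*} [Fintype V] (A : V → V → Prop)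
    (hLSC : LocallySemicomplete A) (hconn : UConn A) (hns : ¬ IsStrong A)
    (ℓ : ℕ) (C : ℕ → Set V) (hord : IsSCCOrdering A ℓ C)
    (d : ℕ)
    (hd : IsLeast {k : ℕ | ∃ q : List V,
        IsSTPath A (C 0) (C (ℓ - 1)) q ∧ q.length - 1 = k} d)
    (P : List V) (hP : IsOrientedSTPath A (C 0) (C (ℓ - 1)) P) :
    d ≤ fwd A (pathPairs P) := by
  obtain ⟨huniq, hmem, hnoarc⟩ := hord
  -- no vertex lies in both `C 0` and `C (ℓ-1)`
  have hST : ∀ v : V, v ∈ C 0 → v ∈ C (ℓ - 1) → False := by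
    intro v h0 h1
    obtain ⟨i, ⟨hi, _⟩, hun⟩ := huniq v
    have e0 : (0 : ℕ) = i := hun 0 ⟨by omega, h0⟩
    have e1 : ℓ - 1 = i := hun (ℓ - 1) ⟨by omega, h1⟩
    have hℓ : ℓ = 1 := by omega
    apply hns
    intro p q
    obtain ⟨ip, ⟨hip, hp⟩, _⟩ := huniq p
    obtain ⟨iq, ⟨hiq, hq⟩, _⟩ := huniq q
    have hip0 : ip = 0 := by omega
    have hiq0 : iq = 0 := by omega
    exact ((hmem 0 (by omega) p (by rwa [hip0] at hp) q).mp (by rwa [hiq0] at hq)).1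
  -- an arc into `C 0` starts in `C 0`
  have hIntoS : ∀ u v : V, A u v → v ∈ C 0 → u ∈ C 0 := by
    intro u v hA hv
    obtain ⟨i, ⟨hi, hu⟩, _⟩ := huniq u
    by_cases h0 : i = 0
    · exact h0 ▸ hu
    · exact absurd hA (hnoarc 0 i (by omega) hi u hu v hv)
  -- an arc out of `C (ℓ-1)` ends in `C (ℓ-1)`
  have hFromT : ∀ u v : V, A u v → u ∈ C (ℓ - 1) → v ∈ C (ℓ - 1) := by
    intro u v hA hu
    obtain ⟨j, ⟨hj, hv⟩, _⟩ := huniq v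
    by_cases h0 : j = ℓ - 1
    · exact h0 ▸ hv
    · exact absurd hA (hnoarc j (ℓ - 1) (by omega) (by omega) u hu v hv)
  suffices H : ∀ n (P : List V), P.length ≤ n →
      IsOrientedSTPath A (C 0) (C (ℓ - 1)) P →
      ∃ q, IsSTPath A (C 0) (C (ℓ - 1)) q ∧ q.length - 1 ≤ fwd A (pathPairs P) by
    obtain ⟨q, hq, hle⟩ := H P.length P le_rfl hP
    exact le_trans (hd.2 ⟨q, hq, rfl⟩) hle
  intro n
  induction n with
  | zero =>
    intro P hlen hP'
    exact absurd (List.length_eq_zero_iff.mp (Nat.le_zero.mp hlen)) hP'.1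
  | succ n ih =>
    intro P hlen hP'
    obtain ⟨hne, hnd, hor, hhead, hlast, hint⟩ := hP'
    by_cases hch : P.Chain' A
    · exact ⟨P, ⟨hne, hnd, hch, hhead, hlast, hint⟩, by rw [fwd_of_chain' hch]⟩
    · obtain ⟨a, x, y, l, rfl, hcha, hxy⟩ := firstBad hch
      have hxyP : (x, y) ∈ pathPairs (a ++ x :: y :: l) := by
        rw [pathPairs_append a x (y :: l)]
        exact List.mem_append_right _ (List.mem_cons_self)
      have hyx : A y x := (hor _ hxyP).resolve_left hxy
      cases l with
      | nil =>
        exfalso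
        have hlasteq : (a ++ x :: y :: ([] : List V)).getLast? = some y := by
          rw [List.getLast?_append]
          rfl
        have hyT : y ∈ C (ℓ - 1) := hlast y hlasteq
        have hxT : x ∈ C (ℓ - 1) := hFromT y x hyx hyT
        cases a with
        | nil => exact hST x (hhead x rfl) hxT
        | cons a0 a1 =>
          have hxint : x ∈ ((a0 :: a1) ++ x :: y :: ([] : List V)).tail.dropLast := by
            rw [mem_tail_dropLast_iff hnd]
            refine ⟨by simp, ?_, ?_⟩
            · simp only [List.cons_append, List.head?_cons]
              intro h
              injection h with h
              have ha0 : a0 ∉ a1 ++ x :: y :: ([] : List V) :=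
                (List.nodup_cons.mp (by simpa only [List.cons_append] using hnd)).1
              exact ha0 (by simp [h])
            · rw [hlasteq]
              intro h
              injection h with h
              have : (x :: y :: ([] : List V)).Nodup :=
                (List.nodup_append.mp (by exact hnd)).2.1
              simp [h] at this
          exact (hint x hxint).2 hxT
      | cons z b =>
        rcases List.eq_nil_or_concat a with rfl | ⟨a', w, rfl⟩
        · exfalso
          have hxS : x ∈ C 0 := hhead x rfl
          have hyS : y ∈ C 0 := hIntoS y x hyx hxS
          have hyint : y ∈ (([] : List V) ++ x :: y :: z :: b).tail.dropLast := by
            rw [mem_tail_dropLast_iff hnd]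
            refine ⟨by simp, ?_, ?_⟩
            · simp only [List.nil_append, List.head?_cons]
              intro h
              injection h with h
              have : x ∉ y :: z :: b := (List.nodup_cons.mp (by simpa using hnd)).1
              exact this (by simp [h])
            · simp only [List.nil_append, List.getLast?_cons_cons]
              intro h
              have hmem' : y ∈ z :: b := mem_of_getLast?' h
              have : y ∉ z :: b :=
                (List.nodup_cons.mp (List.nodup_cons.mp (by simpa using hnd)).2).1
              exact this hmem'
          exact (hint y hyint).1 hyS
        · -- main case: predecessor w of x exists
          simp only [List.concat_eq_append] at *
          have hwx : A w x := by
            obtain ⟨-, -, hlink⟩ := List.isChain_append.mp hcha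
            exact hlink w (by rw [List.getLast?_concat]; rfl) x rfl
          have hwy : w ≠ y := by
            intro h
            have hdisj := (List.nodup_append'.mp hnd).2.2
            exact hdisj (show w ∈ a' ++ [w] by simp) (show w ∈ x :: y :: z :: b by simp [← h])
          have horwy : A w y ∨ A y w := hLSC.2.2 x w y hwx hyx hwy
          -- the shortened path
          have hpp : pathPairs ((a' ++ [w]) ++ x :: y :: z :: b) =
              (pathPairs (a' ++ [w]) ++ [(w, x)]) ++ ((x, y) :: pathPairs (y :: z :: b)) := by
            rw [pathPairs_append (a' ++ [w]) x (y :: z :: b)]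
            congr 1
            rw [List.append_assoc]
            exact pathPairs_append a' w [x]
          have hpp' : pathPairs ((a' ++ [w]) ++ y :: z :: b) =
              pathPairs (a' ++ [w]) ++ ((w, y) :: pathPairs (y :: z :: b)) := by
            rw [List.append_assoc]
            exact pathPairs_append a' w (y :: z :: b)
          have hsub : List.Sublist ((a' ++ [w]) ++ y :: z :: b)
              ((a' ++ [w]) ++ x :: y :: z :: b) :=
            (List.sublist_cons_self x (y :: z :: b)).append_left _
          have hnd' : ((a' ++ [w]) ++ y :: z :: b).Nodup := hnd.sublist hsub
          -- head? computations
          obtain ⟨h0, c', hc⟩ : ∃ h0 c', a' ++ [w] = h0 :: c' := by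
            cases a' with
            | nil => exact ⟨w, [], rfl⟩
            | cons u t => exact ⟨u, t ++ [w], rfl⟩
          have hheadL : ((a' ++ [w]) ++ x :: y :: z :: b).head? = some h0 := by
            rw [hc]; rfl
          have hheadL' : ((a' ++ [w]) ++ y :: z :: b).head? = some h0 := by
            rw [hc]; rfl
          -- getLast? computations
          have hlastL : ((a' ++ [w]) ++ x :: y :: z :: b).getLast? = (z :: b).getLast? := by
            rw [List.getLast?_append, List.getLast?_cons_cons, List.getLast?_cons_cons,
              List.getLast?_eq_getLast (List.cons_ne_nil z b)]
            rfl
          have hlastL' : ((a' ++ [w]) ++ y :: z :: b).getLast? = (z :: b).getLast? := by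
            rw [List.getLast?_append, List.getLast?_cons_cons,
              List.getLast?_eq_getLast (List.cons_ne_nil z b)]
            rfl
          -- the shortened path is an oriented (C 0, C (ℓ-1))-path
          have hor' : ∀ q ∈ pathPairs ((a' ++ [w]) ++ y :: z :: b),
              A q.1 q.2 ∨ A q.2 q.1 := by
            intro q hq
            rw [hpp', List.mem_append, List.mem_cons] at hq
            rcases hq with hq | hq | hq
            · exact hor q (by rw [hpp]; simp [hq])
            · exact hq ▸ horwy
            · exact hor q (by rw [hpp]; simp [hq])
          have hhead2 : ∀ v ∈ ((a' ++ [w]) ++ y :: z :: b).head?, v ∈ C 0 := by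
            intro v hv
            rw [hheadL'] at hv
            exact hhead v (by rw [hheadL]; exact hv)
          have hlast2 : ∀ v ∈ ((a' ++ [w]) ++ y :: z :: b).getLast?, v ∈ C (ℓ - 1) := by
            intro v hv
            rw [hlastL'] at hv
            exact hlast v (by rw [hlastL]; exact hv)
          have hint2 : ∀ v ∈ ((a' ++ [w]) ++ y :: z :: b).tail.dropLast,
              v ∉ C 0 ∧ v ∉ C (ℓ - 1) := by
            intro v hv
            rw [mem_tail_dropLast_iff hnd'] at hv
            obtain ⟨hvm, h1, h2⟩ := hv
            apply hint
            rw [mem_tail_dropLast_iff hnd]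
            refine ⟨hsub.subset hvm, ?_, ?_⟩
            · rw [hheadL]; rw [hheadL'] at h1; exact h1
            · rw [hlastL]; rw [hlastL'] at h2; exact h2
          have hne' : (a' ++ [w]) ++ y :: z :: b ≠ [] := by simp
          have hlen' : ((a' ++ [w]) ++ y :: z :: b).length ≤ n := by
            simp only [List.length_append, List.length_cons, List.length_singleton] at hlen ⊢
            omega
          obtain ⟨q, hq, hle⟩ := ih ((a' ++ [w]) ++ y :: z :: b) hlen'
            ⟨hne', hnd', hor', hhead2, hlast2, hint2⟩
          refine ⟨q, hq, le_trans hle ?_⟩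
          -- fwd comparison
          rw [hpp, hpp', fwd_append, fwd_append, fwd_append,
            fwd_cons_pos hwx, fwd_cons_neg hxy]
          have h1 := fwd_cons_le A (w, y) (pathPairs (y :: z :: b))
          have h2 : fwd A [(w, x)] = 1 := by rw [fwd_cons_pos hwx]; rfl
          omega
end

section
/- Let B be a bipartite undirected graph with partite sets X and Y where |X| = |Y| ≥ 2. Let H be the digraph obtained from B by orienting every edge of B from X to Y and adding, for every pair of distinct vertices of Y, at least one arc between them (in an arbitrary direction). Then H has a Hamilton oriented cycle if and only if B has a Hamilton cycle. -/
/-- The adjacency relation, on `X ⊕ Y`, of the bipartite graph with partite sets `X`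
and `Y` and edge relation `E`. -/
def bipAdj {X Y : Type*} (E : X → Y → Prop) (a b : X ⊕ Y) : Prop :=
  (∃ x y, a = Sum.inl x ∧ b = Sum.inr y ∧ E x y) ∨
  (∃ x y, a = Sum.inr y ∧ b = Sum.inl x ∧ E x y)

/-- `l` is a Hamilton cycle of the bipartite graph `E`. -/
def IsHamCycleBip {X Y : Type*} (E : X → Y → Prop) (l : List (X ⊕ Y)) : Prop :=
  3 ≤ l.length ∧ l.Nodup ∧ (∀ v : X ⊕ Y, v ∈ l) ∧
    ∀ p ∈ cycPairs l, bipAdj E p.1 p.2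

private lemma zip_sum_aux {α : Type*} (f : α → ℕ) :
    ∀ (l r : List α), l.length = r.length →
      ((l.zip r).map (fun p => f p.1 + f p.2)).sum = (l.map f).sum + (r.map f).sum := by
  intro l
  induction l with
  | nil => intro r h; rw [List.length_nil] at h; rw [eq_comm, List.length_eq_zero_iff] at h; subst h; simp
  | cons a t ih =>
    intro r h
    cases r with
    | nil => simp at h
    | cons b s =>
      simp only [List.zip_cons_cons, List.map_cons, List.sum_cons]
      rw [ih s (by simpa using h)]
      omega

private lemma sum_map_indicator {α : Type*} (q : α → Bool) (l : List α) :
    (l.map (fun v => if q v then 1 else 0)).sum = l.countP q := by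
  induction l with
  | nil => simp
  | cons a t ih =>
    simp only [List.map_cons, List.sum_cons, List.countP_cons, ih]
    by_cases h : q a <;> simp [h] <;> omega

/-- let `B` be a bipartite graph with partite sets `X`, `Y`,
`|X| = |Y| ≥ 2`, and let `H` be the digraph obtained from `B` by orienting every
edge from `X` to `Y` and adding at least one arc (in an arbitrary direction) between
every pair of distinct vertices of `Y`.  Then `H` has a Hamilton oriented cycle iff
`B` has a Hamilton cycle. -/
theorem statement18 {X Y : Type*} [Fintype X] [Fintype Y]
    (E : X → Y → Prop)
    (hcard : Fintype.card X = Fintype.card Y) (h2 : 2 ≤ Fintype.card Y)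
    (H : X ⊕ Y → X ⊕ Y → Prop)
    (hH1 : ∀ (x : X) (y : Y), H (Sum.inl x) (Sum.inr y) ↔ E x y)
    (hH2 : ∀ x x' : X, ¬ H (Sum.inl x) (Sum.inl x'))
    (hH3 : ∀ (y : Y) (x : X), ¬ H (Sum.inr y) (Sum.inl x))
    (hH4 : ∀ y : Y, ¬ H (Sum.inr y) (Sum.inr y))
    (hH5 : ∀ y y' : Y, y ≠ y' → H (Sum.inr y) (Sum.inr y') ∨ H (Sum.inr y') (Sum.inr y)) :
    (∃ l : List (X ⊕ Y), IsHamOrientedCycle H l) ↔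
      (∃ l : List (X ⊕ Y), IsHamCycleBip E l) := by
  classical
  constructor
  · rintro ⟨l, h3, hnd, hmem, hadj⟩
    refine ⟨l, h3, hnd, hmem, ?_⟩
    -- basic lengths
    have hrot : (l.rotate 1).length = l.length := by simp
    have hcyclen : (cycPairs l).length = l.length := by
      simp [cycPairs]
    -- length of l is card X + card Y
    have htofin : l.toFinset = Finset.univ := by
      ext v; simp [hmem v]
    have hlen : l.length = Fintype.card X + Fintype.card Y := by
      have := List.toFinset_card_of_nodup hnd
      rw [htofin] at this
      simp only [Finset.card_univ, Fintype.card_sum] at this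
      omega
    -- count of left elements
    have hcount : l.countP (fun v => v.isLeft) = Fintype.card X := by
      have hfn : (l.filter (fun v => v.isLeft)).Nodup := hnd.filter _
      have hft : (l.filter (fun v => v.isLeft)).toFinset =
          Finset.univ.image Sum.inl := by
        ext v
        simp only [List.toFinset_filter, htofin, Finset.mem_filter, Finset.mem_univ,
          true_and, Finset.mem_image]
        cases v <;> simp
      have := List.toFinset_card_of_nodup hfn
      rw [hft, Finset.card_image_of_injective _ Sum.inl_injective,
        Finset.card_univ] at this
      rw [List.countP_eq_length_filter, this]
    -- the indicator function
    set f : X ⊕ Y → ℕ := fun v => if v.isLeft then 1 else 0 with hf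
    set g : (X ⊕ Y) × (X ⊕ Y) → ℕ := fun p => f p.1 + f p.2 with hg
    have hsum : ((cycPairs l).map g).sum = l.length := by
      rw [show (cycPairs l).map g = (l.zip (l.rotate 1)).map (fun p => f p.1 + f p.2)
        from rfl, zip_sum_aux f l (l.rotate 1) hrot.symm]
      have h1 : (l.map f).sum = Fintype.card X := by
        rw [hf, sum_map_indicator, hcount]
      have h2' : ((l.rotate 1).map f).sum = Fintype.card X := by
        have hperm : List.Perm ((l.rotate 1).map f) (l.map f) :=
          List.Perm.map f (l.rotate_perm 1)
        rw [hperm.sum_eq, hf, sum_map_indicator, hcount]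
      omega
    -- each pair contributes at most 1 (no X-X pairs)
    have hle1 : ∀ x ∈ (cycPairs l).map g, x ≤ 1 := by
      rintro x hx
      obtain ⟨p, hp, rfl⟩ := List.mem_map.1 hx
      obtain ⟨a, b⟩ := p
      cases a with
      | inl xa =>
        cases b with
        | inl xb =>
          rcases hadj _ hp with h | h
          · exact absurd h (hH2 _ _)
          · exact absurd h (hH2 _ _)
        | inr yb => simp [hg, hf]
      | inr ya => cases b <;> simp [hg, hf]
    -- no pair has both coordinates in Y
    have hnoYY : ∀ p ∈ cycPairs l, g p ≠ 0 := by
      intro p hp h0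
      have hmem0 : (0 : ℕ) ∈ (cycPairs l).map g := by
        rw [← h0]; exact List.mem_map_of_mem (f := g) hp
      have hperm := List.perm_cons_erase hmem0
      have hsum' := hperm.sum_eq
      rw [hsum] at hsum'
      have hle : (((cycPairs l).map g).erase 0).sum ≤
          (((cycPairs l).map g).erase 0).length • 1 :=
        List.sum_le_card_nsmul _ 1 (fun x hx => hle1 x (List.mem_of_mem_erase hx))
      have hlen' := List.length_erase_add_one hmem0
      rw [List.length_map, hcyclen] at hlen'
      simp only [List.sum_cons, Nat.zero_add, smul_eq_mul, mul_one] at hsum' hle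
      omega
    -- conclude bipAdj for each pair
    intro p hp
    obtain ⟨a, b⟩ := p
    cases a with
    | inl xa =>
      cases b with
      | inl xb =>
        rcases hadj _ hp with h | h
        · exact absurd h (hH2 _ _)
        · exact absurd h (hH2 _ _)
      | inr yb =>
        rcases hadj _ hp with h | h
        · exact Or.inl ⟨xa, yb, rfl, rfl, (hH1 _ _).1 h⟩
        · exact absurd h (hH3 _ _)
    | inr ya =>
      cases b with
      | inl xb =>
        rcases hadj _ hp with h | h
        · exact absurd h (hH3 _ _)
        · exact Or.inr ⟨xb, ya, rfl, rfl, (hH1 _ _).1 h⟩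
      | inr yb =>
        exact absurd rfl (hnoYY _ hp)
  · rintro ⟨l, h3, hnd, hmem, hadj⟩
    refine ⟨l, h3, hnd, hmem, ?_⟩
    intro p hp
    rcases hadj p hp with ⟨x, y, h1, h2', he⟩ | ⟨x, y, h1, h2', he⟩
    · rw [h1, h2']; exact Or.inl ((hH1 x y).2 he)
    · rw [h1, h2']; exact Or.inr ((hH1 x y).2 he)
end
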